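/- arXiv:1301.0543 — 12 statements merged into one kernel-verified Lean document; each statement's English description precedes it below -/
import Mathlib

section
/- Let g be an invertible 3×3 real symmetric matrix with inverse entries g^{ij}, let c ∈ ℝ, and define the totally antisymmetric array C_{ijk} := c·ε_{ijk}. Then for all indices i, j one has g_{ij} + (1/2)·Σ_{m,n,p,q} C_{imn} g^{mp} g^{nq} C_{pqj} = (1 + c²/det g)·g_{ij}. -/
open Matrix
/-- The totally antisymmetric alternating symbol on three indices with ε₁₂₃ = 1. -/
def eps3 (i j k : Fin 3) : ℝ :=
  if (i, j, k) = (0, 1, 2) ∨ (i, j, k) = (1, 2, 0) ∨ (i, j, k) = (2, 0, 1) then 1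
  else if (i, j, k) = (0, 2, 1) ∨ (i, j, k) = (2, 1, 0) ∨ (i, j, k) = (1, 0, 2) then -1
  else 0

set_option maxHeartbeats 1000000 in
lemma key (B : Matrix (Fin 3) (Fin 3) ℝ) (i j : Fin 3) :
    (1/2) * ∑ m, ∑ n, ∑ p, ∑ q, eps3 i m n * B m p * B n q * eps3 p q j
      = B.adjugate j i := by
  fin_cases i <;> fin_cases j <;>
  · simp only [Fin.sum_univ_three, eps3, Matrix.adjugate_fin_three]
    norm_num [Prod.ext_iff, Fin.ext_iff]
    ring

/-- For an invertible 3×3 real symmetric matrix g and C_{ijk} = c·ε_{ijk}, one has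
g_{ij} + (1/2)·Σ C_{imn} g^{mp} g^{nq} C_{pqj} = (1 + c²/det g)·g_{ij}. -/
theorem stmt_0 (g : Matrix (Fin 3) (Fin 3) ℝ) (hsymm : g.IsSymm) (hdet : g.det ≠ 0)
    (c : ℝ) (C : Fin 3 → Fin 3 → Fin 3 → ℝ)
    (hC : ∀ i j k, C i j k = c * eps3 i j k) :
    ∀ i j : Fin 3,
      g i j + (1 / 2) * ∑ m, ∑ n, ∑ p, ∑ q, C i m n * g⁻¹ m p * g⁻¹ n q * C p q j
        = (1 + c ^ 2 / g.det) * g i j := by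
  intro i j
  have hu : IsUnit g.det := isUnit_iff_ne_zero.mpr hdet
  have h1 : ∑ m, ∑ n, ∑ p, ∑ q, C i m n * g⁻¹ m p * g⁻¹ n q * C p q j
      = c ^ 2 * ∑ m, ∑ n, ∑ p, ∑ q, eps3 i m n * g⁻¹ m p * g⁻¹ n q * eps3 p q j := by
    simp only [hC, Finset.mul_sum]; congr 1; ext m; congr 1; ext n; congr 1; ext p
    congr 1; ext q; ring
  have h2 := key g⁻¹ i j
  have hadj : g⁻¹.adjugate = g.det⁻¹ • g := by
    have h := Matrix.inv_def g⁻¹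
    rw [Matrix.nonsing_inv_nonsing_inv g hu, Matrix.det_nonsing_inv,
      Ring.inverse_eq_inv', inv_inv] at h
    calc g⁻¹.adjugate = g.det⁻¹ • (g.det • g⁻¹.adjugate) := by
          rw [smul_smul, inv_mul_cancel₀ hdet, one_smul]
      _ = g.det⁻¹ • g := by rw [← h]
  rw [h1, mul_left_comm ((1:ℝ)/2) (c^2), h2, hadj]
  simp only [Matrix.smul_apply, smul_eq_mul, hsymm.apply i j]
  field_simp
end

section
/- Let ḡ be a Lorentzian 3×3 real symmetric matrix, ḡ8 a positive-definite 8×8 real symmetric matrix, ω ∈ ℝ, and set W² := ω²·|ḡ|. If W² < 1, then M_Ω(ḡ, ḡ8, ω) = M_C(g, g8, c), where g := (1−W²)^(−2/3)·ḡ, g8 := (1−W²)^(1/3)·ḡ8 and c := ω·det ḡ/(1−W²). Thus when W² < 1 the trivector can be gauged away in favour of a 3-form. -/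
/-!
Put `s := 1 + ω² det ḡ = 1 - W² > 0` and `t := s^(1/3)`. Rescaling `ḡ ↦ t⁻² ḡ`, `ḡ₈ ↦ t ḡ₈`
multiplies `det ḡ · det ḡ₈` by `t²`, hence the overall prefactor by `t⁻¹`. With
`c = ω det ḡ / t³` one has `c² / det g = ω² det ḡ` and `c / det g = ω t³`, so every block
coefficient of the `C`-frame metric reduces to the `Ω`-frame one using only
`t³ = 1 + ω² det ḡ`.
-/

open Matrix

/-- The (g,C)-frame generalised metric: a 14×14 matrix in 3+3+8 block form. -/
noncomputable def MC (g : Matrix (Fin 3) (Fin 3) ℝ) (g8 : Matrix (Fin 8) (Fin 8) ℝ) (c : ℝ) :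
    Matrix ((Fin 3 ⊕ Fin 3) ⊕ Fin 8) ((Fin 3 ⊕ Fin 3) ⊕ Fin 8) ℝ :=
  |g.det * g8.det| ^ (-(1 : ℝ) / 2) •
    fromBlocks
      (fromBlocks ((1 + c ^ 2 / g.det) • g) ((c / g.det) • g) ((c / g.det) • g)
        ((1 / g.det) • g))
      0 0 g8

/-- The (ḡ,Ω)-frame generalised metric: a 14×14 matrix in 3+3+8 block form. -/
noncomputable def MOmega (g : Matrix (Fin 3) (Fin 3) ℝ) (g8 : Matrix (Fin 8) (Fin 8) ℝ)
    (ω : ℝ) : Matrix ((Fin 3 ⊕ Fin 3) ⊕ Fin 8) ((Fin 3 ⊕ Fin 3) ⊕ Fin 8) ℝ :=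
  |g.det * g8.det| ^ (-(1 : ℝ) / 2) •
    fromBlocks
      (fromBlocks g (ω • g) (ω • g) ((ω ^ 2 + 1 / g.det) • g))
      0 0 g8

/-- A 3×3 real symmetric (Hermitian) matrix is Lorentzian if it has exactly one negative
and two positive eigenvalues. -/
def Lorentzian3 (g : Matrix (Fin 3) (Fin 3) ℝ) : Prop :=
  ∃ hg : g.IsHermitian,
    {i | hg.eigenvalues i < 0}.ncard = 1 ∧ {i | 0 < hg.eigenvalues i}.ncard = 2

theorem Matrix.IsHermitian.det_neg_of_ncard_eigenvalues {n : Type*} [Fintype n] [DecidableEq n]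
    {A : Matrix n n ℝ} (hA : A.IsHermitian) (hneg : {i | hA.eigenvalues i < 0}.ncard = 1)
    (hpos : {i | 0 < hA.eigenvalues i}.ncard = Fintype.card n - 1) :
    A.det < 0 := by
  obtain ⟨i₀, hi₀⟩ := Set.ncard_eq_one.mp hneg
  have hneg₀ : hA.eigenvalues i₀ < 0 := (Set.ext_iff.mp hi₀ i₀).mpr rfl
  have hpos_eq : {i | 0 < hA.eigenvalues i} = {i₀}ᶜ := by
    refine Set.eq_of_subset_of_ncard_le (fun i hi hii₀ => ?_) ?_
    · rw [Set.mem_singleton_iff.mp hii₀] at hi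
      exact (lt_asymm hi hneg₀).elim
    · rw [hpos, Set.ncard_compl, Set.ncard_singleton, Nat.card_eq_fintype_card]
  rw [hA.det_eq_prod_eigenvalues, ← Finset.mul_prod_erase _ _ (Finset.mem_univ i₀)]
  refine mul_neg_of_neg_of_pos (mod_cast hneg₀) (Finset.prod_pos fun i hi => ?_)
  have : i ∈ {i | 0 < hA.eigenvalues i} := by
    rw [hpos_eq]; exact Finset.ne_of_mem_erase hi
  exact_mod_cast this

theorem Lorentzian3.det_neg {g : Matrix (Fin 3) (Fin 3) ℝ} (hg : Lorentzian3 g) : g.det < 0 :=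
  let ⟨hH, hneg, hpos⟩ := hg
  hH.det_neg_of_ncard_eigenvalues hneg hpos

theorem MOmega_eq_MC_of_cube_eq {g : Matrix (Fin 3) (Fin 3) ℝ} (g8 : Matrix (Fin 8) (Fin 8) ℝ)
    {ω t : ℝ} (hdet : g.det ≠ 0) (ht : 0 < t) (ht3 : t ^ 3 = 1 + ω ^ 2 * g.det) :
    MOmega g g8 ω = MC ((t ^ 2)⁻¹ • g) (t • g8) (ω * g.det / t ^ 3) := by
  have hprefactor : |((t ^ 2)⁻¹ • g).det * (t • g8).det| ^ (-(1 : ℝ) / 2)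
      = t⁻¹ * |g.det * g8.det| ^ (-(1 : ℝ) / 2) := by
    have habs : |((t ^ 2)⁻¹ • g).det * (t • g8).det| = t ^ 2 * |g.det * g8.det| := by
      simp only [det_smul, Fintype.card_fin]
      rw [show (t ^ 2)⁻¹ ^ 3 * g.det * (t ^ 8 * g8.det) = t ^ 2 * (g.det * g8.det) by
        field_simp, abs_mul, abs_of_pos (by positivity)]
    rw [habs, Real.mul_rpow (by positivity) (abs_nonneg _), ← Real.rpow_natCast,
      ← Real.rpow_mul ht.le]
    norm_num [Real.rpow_neg_one]
  rw [MOmega, MC, hprefactor]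
  simp only [det_smul, Fintype.card_fin, fromBlocks_smul, smul_smul, smul_zero, fromBlocks_inj]
  set v := |g.det * g8.det| ^ (-(1 : ℝ) / 2)
  refine ⟨⟨?_, ?_, ?_, ?_⟩, trivial, trivial, ?_⟩ <;> congr 1 <;> field_simp
  · linear_combination v * ht3
  · linear_combination -v * ht3

theorem MOmega_eq_MC_rpow {g : Matrix (Fin 3) (Fin 3) ℝ} (g8 : Matrix (Fin 8) (Fin 8) ℝ) {ω : ℝ}
    (hdet : g.det ≠ 0) (hs : 0 < 1 + ω ^ 2 * g.det) :
    MOmega g g8 ω =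
      MC ((1 + ω ^ 2 * g.det) ^ (-(2 : ℝ) / 3) • g) ((1 + ω ^ 2 * g.det) ^ ((1 : ℝ) / 3) • g8)
        (ω * g.det / (1 + ω ^ 2 * g.det)) := by
  set s := 1 + ω ^ 2 * g.det
  have hcube : (s ^ ((1 : ℝ) / 3)) ^ 3 = s := by
    rw [← Real.rpow_natCast, ← Real.rpow_mul hs.le]; norm_num
  have hsq_inv : ((s ^ ((1 : ℝ) / 3)) ^ 2)⁻¹ = s ^ (-(2 : ℝ) / 3) := by
    rw [← Real.rpow_natCast, ← Real.rpow_mul hs.le, ← Real.rpow_neg hs.le]; norm_num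
  have h := MOmega_eq_MC_of_cube_eq g8 hdet (Real.rpow_pos_of_pos hs _) hcube
  rwa [hsq_inv, hcube] at h

theorem stmt_2_general (gb : Matrix (Fin 3) (Fin 3) ℝ) (gb8 : Matrix (Fin 8) (Fin 8) ℝ)
    (hgb : Lorentzian3 gb) (ω : ℝ)
    (hW : ω ^ 2 * (-gb.det) < 1) :
    MOmega gb gb8 ω =
      MC ((1 - ω ^ 2 * (-gb.det)) ^ (-(2 : ℝ) / 3) • gb)
        ((1 - ω ^ 2 * (-gb.det)) ^ ((1 : ℝ) / 3) • gb8)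
        (ω * gb.det / (1 - ω ^ 2 * (-gb.det))) := by
  have hs : 1 - ω ^ 2 * (-gb.det) = 1 + ω ^ 2 * gb.det := by ring
  rw [hs]
  exact MOmega_eq_MC_rpow gb8 hgb.det_neg.ne (by linarith)

/-- For Lorentzian ḡ, positive-definite ḡ8, and W² := ω²·|ḡ| < 1 (where |ḡ| = −det ḡ),
the (ḡ,Ω)-frame generalised metric equals the (g,C)-frame one with
g = (1−W²)^(−2/3)·ḡ, g8 = (1−W²)^(1/3)·ḡ8 and c = ω·det ḡ/(1−W²). -/
theorem stmt_2 (gb : Matrix (Fin 3) (Fin 3) ℝ) (gb8 : Matrix (Fin 8) (Fin 8) ℝ)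
    (hgb : Lorentzian3 gb) (hgb8 : gb8.PosDef) (ω : ℝ)
    (hW : ω ^ 2 * (-gb.det) < 1) :
    MOmega gb gb8 ω =
      MC ((1 - ω ^ 2 * (-gb.det)) ^ (-(2 : ℝ) / 3) • gb)
        ((1 - ω ^ 2 * (-gb.det)) ^ ((1 : ℝ) / 3) • gb8)
        (ω * gb.det / (1 - ω ^ 2 * (-gb.det))) :=
  stmt_2_general gb gb8 hgb ω hW
end

section
/- Let g be a Lorentzian 3×3 real symmetric matrix, g8 a positive-definite 8×8 real symmetric matrix, c ∈ ℝ, and set V² := c²/|g|. If V² < 1, then M_C(g, g8, c) = M_Ω(ḡ, ḡ8, ω), where ḡ := (1−V²)^(2/3)·g, ḡ8 := (1−V²)^(−1/3)·g8 and ω := c/(det g·(1−V²)). Thus when V² < 1 the 3-form can be traded for a trivector. -/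
open Matrix

/-! Put `a := (1 - V²)^(1/3)`, so that `ḡ = a² g` and `ḡ8 = a⁻¹ g8`. Then
`det ḡ · det ḡ8 = a⁻² det g · det g8`, so the conformal prefactor of the Ω-frame metric picks up
a factor `a`, and every 3×3 block picks up `a · a² = a³ = 1 - V² = 1 + c² / det g`. After that the
blocks agree one by one; the dual–dual block because
`ω² a³ + 1 / (a³ det g) = (c² + det g) / (a³ (det g)²) = 1 / det g`. -/

theorem rpow_abs_det_rescale (g : Matrix (Fin 3) (Fin 3) ℝ) (g8 : Matrix (Fin 8) (Fin 8) ℝ)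
    {a : ℝ} (ha : 0 < a) :
    |(a ^ 2 • g).det * (a⁻¹ • g8).det| ^ (-(1 : ℝ) / 2) =
      a * |g.det * g8.det| ^ (-(1 : ℝ) / 2) := by
  have hdet : (a ^ 2 • g).det * (a⁻¹ • g8).det = (a ^ 2)⁻¹ * (g.det * g8.det) := by
    simp only [det_smul, Fintype.card_fin]
    field_simp
  rw [hdet, abs_mul, abs_of_pos (by positivity),
    Real.mul_rpow (by positivity) (abs_nonneg _), Real.inv_rpow (by positivity),
    ← Real.rpow_natCast, ← Real.rpow_mul ha.le]
  norm_num [Real.rpow_neg_one]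

theorem MOmega_rescale (g : Matrix (Fin 3) (Fin 3) ℝ) (g8 : Matrix (Fin 8) (Fin 8) ℝ)
    (ω : ℝ) {a : ℝ} (ha : 0 < a) :
    MOmega (a ^ 2 • g) (a⁻¹ • g8) ω = |g.det * g8.det| ^ (-(1 : ℝ) / 2) •
      fromBlocks
        (fromBlocks (a ^ 3 • g) ((ω * a ^ 3) • g) ((ω * a ^ 3) • g)
          ((ω ^ 2 * a ^ 3 + 1 / (a ^ 3 * g.det)) • g))
        0 0 g8 := by
  rw [MOmega, rpow_abs_det_rescale g g8 ha, mul_comm, mul_smul]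
  congr 1
  simp only [fromBlocks_smul, smul_zero, smul_smul, det_smul, Fintype.card_fin]
  rw [mul_inv_cancel₀ ha.ne', one_smul]
  congr 2 <;> congr 1
  · ring
  · ring
  · ring
  · field_simp

theorem MC_eq_MOmega_rescale {g : Matrix (Fin 3) (Fin 3) ℝ} (g8 : Matrix (Fin 8) (Fin 8) ℝ)
    (c : ℝ) (hdet : g.det ≠ 0) {a : ℝ} (ha : 0 < a) (ha3 : a ^ 3 = 1 + c ^ 2 / g.det) :
    MC g g8 c = MOmega (a ^ 2 • g) (a⁻¹ • g8) (c / (g.det * a ^ 3)) := by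
  rw [MOmega_rescale g g8 _ ha, MC, ← ha3]
  congr 4
  · field_simp
  · field_simp
  · field_simp
    rw [ha3]
    field_simp
    ring

theorem stmt_3_general (g : Matrix (Fin 3) (Fin 3) ℝ) (g8 : Matrix (Fin 8) (Fin 8) ℝ)
    (hg : Lorentzian3 g) (c : ℝ)
    (hV : c ^ 2 / (-g.det) < 1) :
    MC g g8 c =
      MOmega ((1 - c ^ 2 / (-g.det)) ^ ((2 : ℝ) / 3) • g)
        ((1 - c ^ 2 / (-g.det)) ^ (-(1 : ℝ) / 3) • g8)
        (c / (g.det * (1 - c ^ 2 / (-g.det)))) := by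
  set s := 1 - c ^ 2 / (-g.det) with hs_def
  have hs : 0 < s := sub_pos.mpr hV
  set a := s ^ ((1 : ℝ) / 3)
  have hcube : a ^ 3 = s := by
    rw [← Real.rpow_natCast, ← Real.rpow_mul hs.le]
    norm_num
  have hsq : s ^ ((2 : ℝ) / 3) = a ^ 2 := by
    rw [← Real.rpow_natCast, ← Real.rpow_mul hs.le]
    norm_num
  have hinv : s ^ (-(1 : ℝ) / 3) = a⁻¹ := by
    rw [neg_div, Real.rpow_neg hs.le]
  have hs_eq : s = 1 + c ^ 2 / g.det := by
    rw [hs_def, div_neg, sub_neg_eq_add]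
  have key := MC_eq_MOmega_rescale g8 c hg.det_neg.ne (by positivity) (hcube.trans hs_eq)
  rwa [hsq, hinv, ← hcube]

/-- For Lorentzian g, positive-definite g8, and V² := c²/|g| < 1 (where |g| = −det g),
the (g,C)-frame generalised metric equals the (ḡ,Ω)-frame one with
ḡ = (1−V²)^(2/3)·g, ḡ8 = (1−V²)^(−1/3)·g8 and ω = c/(det g·(1−V²)). -/
theorem stmt_3 (g : Matrix (Fin 3) (Fin 3) ℝ) (g8 : Matrix (Fin 8) (Fin 8) ℝ)
    (hg : Lorentzian3 g) (hg8 : g8.PosDef) (c : ℝ)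
    (hV : c ^ 2 / (-g.det) < 1) :
    MC g g8 c =
      MOmega ((1 - c ^ 2 / (-g.det)) ^ ((2 : ℝ) / 3) • g)
        ((1 - c ^ 2 / (-g.det)) ^ (-(1 : ℝ) / 3) • g8)
        (c / (g.det * (1 - c ^ 2 / (-g.det)))) :=
  stmt_3_general g g8 hg c hV
end

section
/- Let ḡ be a Lorentzian 3×3 real symmetric matrix, ḡ8 an invertible 8×8 real symmetric matrix, ω ∈ ℝ, and set W² := ω²·|ḡ|. If W² ≥ 1, then there exist no invertible 3×3 real symmetric matrix g, invertible 8×8 real symmetric matrix g8 and c ∈ ℝ such that M_Ω(ḡ, ḡ8, ω) = M_C(g, g8, c): when W² ≥ 1 the trivector cannot be gauged away in favour of a metric and 3-form. -/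
open Matrix

/-!
Comparing the dual–dual blocks gives `a • ḡ = (b / det g) • g`, where `b > 0` is the prefactor of
`M_C` and `a = |det ḡ · det ḡ8|^(-1/2) · (ω² + 1/det ḡ)` is `≥ 0` precisely because `W² ≥ 1` and
`det ḡ < 0`. Hence `g = μ • ḡ`, and as the dimension is odd, `det g = μ³ det ḡ`; substituting this
back gives `b = a μ² det ḡ ≤ 0`.
-/

theorem Matrix.smul_ne_div_det_smul {ι : Type*} [Fintype ι] [DecidableEq ι]
    (hι : Odd (Fintype.card ι)) {A B : Matrix ι ι ℝ} {a b : ℝ}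
    (hA : A.det < 0) (hB : B.det ≠ 0) (ha : 0 ≤ a) (hb : 0 < b) :
    a • A ≠ (b / B.det) • B := by
  intro h
  set μ := a * B.det / b
  have hBμ : B = μ • A := calc
    B = (B.det / b * (b / B.det)) • B := by field_simp; rw [one_smul]
    _ = μ • A := by rw [← smul_smul, ← h, smul_smul]; congr 1; ring
  obtain ⟨k, hk⟩ := hι
  have hdet : B.det = μ ^ (2 * k + 1) * A.det := by rw [← hk, ← det_smul, ← hBμ]
  have hμ : μ ≠ 0 := fun hμ => hB (by rw [hdet, hμ, zero_pow (by omega), zero_mul])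
  have hb_eq : b = a * (μ ^ k) ^ 2 * A.det := by
    apply mul_left_cancel₀ hμ
    calc μ * b = a * B.det := by simp only [μ]; field_simp
      _ = μ * (a * (μ ^ k) ^ 2 * A.det) := by rw [hdet]; ring
  have hb_nonpos : a * (μ ^ k) ^ 2 * A.det ≤ 0 :=
    mul_nonpos_of_nonneg_of_nonpos (by positivity) hA.le
  linarith

theorem MOmega_toBlocks₁₁_toBlocks₂₂ (g : Matrix (Fin 3) (Fin 3) ℝ)
    (g8 : Matrix (Fin 8) (Fin 8) ℝ) (ω : ℝ) :
    (MOmega g g8 ω).toBlocks₁₁.toBlocks₂₂ =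
      (|g.det * g8.det| ^ (-(1 : ℝ) / 2) * (ω ^ 2 + 1 / g.det)) • g := by
  ext i j
  simp [MOmega, toBlocks₁₁, toBlocks₂₂, mul_assoc]

theorem MC_toBlocks₁₁_toBlocks₂₂ (g : Matrix (Fin 3) (Fin 3) ℝ)
    (g8 : Matrix (Fin 8) (Fin 8) ℝ) (c : ℝ) :
    (MC g g8 c).toBlocks₁₁.toBlocks₂₂ = (|g.det * g8.det| ^ (-(1 : ℝ) / 2) / g.det) • g := by
  ext i j
  simp [MC, toBlocks₁₁, toBlocks₂₂, div_eq_mul_inv, mul_assoc]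

theorem stmt_4_general (gb : Matrix (Fin 3) (Fin 3) ℝ) (gb8 : Matrix (Fin 8) (Fin 8) ℝ)
    (ω : ℝ)
    (hW : 1 ≤ ω ^ 2 * (-gb.det)) :
    ¬ ∃ (g : Matrix (Fin 3) (Fin 3) ℝ) (g8 : Matrix (Fin 8) (Fin 8) ℝ) (c : ℝ),
        g.IsSymm ∧ g.det ≠ 0 ∧ g8.IsSymm ∧ g8.det ≠ 0 ∧
        MOmega gb gb8 ω = MC g g8 c := by
  rintro ⟨g, g8, c, -, hg, -, hg8, h⟩
  have hD : gb.det < 0 := by nlinarith [sq_nonneg ω]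
  have hs : 0 ≤ ω ^ 2 + 1 / gb.det := by
    rw [show ω ^ 2 + 1 / gb.det = (ω ^ 2 * gb.det + 1) / gb.det by field_simp [hD.ne]]
    exact div_nonneg_of_nonpos (by linarith) hD.le
  have hdual := congrArg (fun M => M.toBlocks₁₁.toBlocks₂₂) h
  simp only [MOmega_toBlocks₁₁_toBlocks₂₂, MC_toBlocks₁₁_toBlocks₂₂] at hdual
  exact Matrix.smul_ne_div_det_smul (by decide) hD hg (by positivity) (by positivity) hdual

/-- For Lorentzian ḡ, invertible symmetric ḡ8, and W² := ω²·|ḡ| ≥ 1 (where |ḡ| = −det ḡ),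
the (ḡ,Ω)-frame generalised metric cannot be written as any (g,C)-frame generalised metric:
the trivector cannot be gauged away. -/
theorem stmt_4 (gb : Matrix (Fin 3) (Fin 3) ℝ) (gb8 : Matrix (Fin 8) (Fin 8) ℝ)
    (hgb : Lorentzian3 gb) (hgb8 : gb8.IsSymm) (hgb8det : gb8.det ≠ 0) (ω : ℝ)
    (hW : 1 ≤ ω ^ 2 * (-gb.det)) :
    ¬ ∃ (g : Matrix (Fin 3) (Fin 3) ℝ) (g8 : Matrix (Fin 8) (Fin 8) ℝ) (c : ℝ),
        g.IsSymm ∧ g.det ≠ 0 ∧ g8.IsSymm ∧ g8.det ≠ 0 ∧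
        MOmega gb gb8 ω = MC g g8 c :=
  stmt_4_general gb gb8 ω hW
end

section
/- A 2×2 real symmetric matrix g can be written as g = ẽᵀ·diag(−1,1)·ẽ for some invertible lower-triangular real 2×2 matrix ẽ if and only if g_22 > 0 and det g < 0. -/
/-!
For a lower-triangular `e = !![a, 0; c, d]` one computes
`eᵀ * diag(-1, 1) * e = !![c² - a², c d; c d, d²]`, whose determinant is `-(a d)²`; this gives
`g₂₂ = d² > 0` and `det g < 0`. Conversely, a symmetric `g` with `g₂₂ ≠ 0` is determined by
`g₂₁`, `g₂₂` and `det g`, and `c d = g₂₁`, `d² = g₂₂`, `-(a d)² = det g` can be solved with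
`a d ≠ 0` exactly when `g₂₂ > 0 > det g`.
-/

open Matrix

notation "η₂" => Matrix.diagonal ![(-1 : ℝ), 1]

theorem Matrix.IsSymm.transpose_mul_mul {n R : Type*} [Fintype n] [CommSemiring R]
    {D : Matrix n n R} (hD : D.IsSymm) (e : Matrix n n R) : (eᵀ * D * e).IsSymm := by
  rw [IsSymm, transpose_mul, transpose_mul, transpose_transpose, hD.eq, Matrix.mul_assoc]

theorem Matrix.det_transpose_mul_mul {n R : Type*} [Fintype n] [DecidableEq n] [CommRing R]
    (D e : Matrix n n R) : (eᵀ * D * e).det = D.det * e.det ^ 2 := by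
  rw [det_mul, det_mul, det_transpose]; ring

theorem Matrix.IsSymm.eq_of_det_eq {R : Type*} [CommRing R] [IsDomain R]
    {g h : Matrix (Fin 2) (Fin 2) R} (hg : g.IsSymm) (hh : h.IsSymm) (h10 : g 1 0 = h 1 0)
    (h11 : g 1 1 = h 1 1) (hg11 : g 1 1 ≠ 0) (hdet : g.det = h.det) : g = h := by
  have hg01 : g 0 1 = g 1 0 := hg.apply 1 0
  have hh01 : h 0 1 = h 1 0 := hh.apply 1 0
  rw [det_fin_two, det_fin_two] at hdet
  have h00 : g 0 0 = h 0 0 := by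
    apply mul_right_cancel₀ hg11
    nth_rw 2 [h11]
    linear_combination hdet + (g 1 0 + h 1 0) * h10 + g 1 0 * hg01 - h 1 0 * hh01
  ext i j; fin_cases i <;> fin_cases j <;> simp [*]

theorem minkowski_gram_lowerTriangular (a c d : ℝ) :
    (!![a, 0; c, d])ᵀ * η₂ * !![a, 0; c, d] = !![c ^ 2 - a ^ 2, c * d; c * d, d ^ 2] := by
  ext i j; fin_cases i <;> fin_cases j <;> simp [mul_apply, Fin.sum_univ_two] <;> ring

theorem det_minkowski_gram (e : Matrix (Fin 2) (Fin 2) ℝ) :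
    (eᵀ * η₂ * e).det = -e.det ^ 2 := by
  rw [det_transpose_mul_mul, det_diagonal]
  simp

/-- A 2×2 real symmetric matrix g can be written as g = ẽᵀ·diag(−1,1)·ẽ for some invertible
lower-triangular 2×2 real matrix ẽ if and only if g₂₂ > 0 and det g < 0. -/
theorem stmt_5 (g : Matrix (Fin 2) (Fin 2) ℝ) (hg : g.IsSymm) :
    (∃ e : Matrix (Fin 2) (Fin 2) ℝ, e.det ≠ 0 ∧ e 0 1 = 0 ∧
        g = eᵀ * Matrix.diagonal ![(-1 : ℝ), 1] * e) ↔
      0 < g 1 1 ∧ g.det < 0 := by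
  constructor
  · rintro ⟨e, he, he01, rfl⟩
    refine ⟨?_, by rw [det_minkowski_gram, neg_lt_zero]; positivity⟩
    obtain ⟨a, c, d, rfl⟩ : ∃ a c d, e = !![a, 0; c, d] :=
      ⟨e 0 0, e 1 0, e 1 1, he01 ▸ e.eta_fin_two⟩
    have hd : d ≠ 0 := by rintro rfl; simp [det_fin_two_of] at he
    rw [minkowski_gram_lowerTriangular]
    simp only [of_apply, cons_val', cons_val_one, cons_val_fin_one]
    positivity
  · rintro ⟨hg11, hdet⟩
    have hq : 0 < -g.det / g 1 1 := div_pos (neg_pos.2 hdet) hg11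
    set d := √(g 1 1)
    set a := √(-g.det / g 1 1)
    have hd : d ^ 2 = g 1 1 := Real.sq_sqrt hg11.le
    have ha : a ^ 2 = -g.det / g 1 1 := Real.sq_sqrt hq.le
    have hd0 : d ≠ 0 := (Real.sqrt_pos.2 hg11).ne'
    have ha0 : a ≠ 0 := (Real.sqrt_pos.2 hq).ne'
    refine ⟨!![a, 0; g 1 0 / d, d], by simp [det_fin_two_of, ha0, hd0], rfl, ?_⟩
    refine hg.eq_of_det_eq (isSymm_diagonal _ |>.transpose_mul_mul _) ?_ ?_ hg11.ne' ?_
    · simp [minkowski_gram_lowerTriangular, hd0]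
    · simp [minkowski_gram_lowerTriangular, hd]
    · rw [det_minkowski_gram, det_fin_two_of, zero_mul, sub_zero, mul_pow, ha, hd,
        div_mul_cancel₀ _ hg11.ne', neg_neg]
end

section
/- A 2×2 real symmetric matrix g can be written as g = êᵀ·diag(−1,1)·ê for some invertible upper-triangular real 2×2 matrix ê if and only if g_11 < 0 and det g < 0. -/
open Matrix

theorem transpose_mul_diagonal_mul_upperTriangular {R : Type*} [CommRing R] (a b d : R) :
    (!![a, b; 0, d])ᵀ * diagonal ![-1, 1] * !![a, b; 0, d] =
      !![-a ^ 2, -(a * b); -(a * b), d ^ 2 - b ^ 2] := by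
  ext i j
  fin_cases i <;> fin_cases j <;> simp [mul_apply, Fin.sum_univ_two] <;> ring

theorem eq_upperTriangular_of_apply_one_zero {R : Type*} [Zero R]
    (e : Matrix (Fin 2) (Fin 2) R) (h : e 1 0 = 0) :
    e = !![e 0 0, e 0 1; 0, e 1 1] := by
  rw [← h]
  exact eta_fin_two e

theorem eq_of_isSymm_fin_two {α : Type*} {g : Matrix (Fin 2) (Fin 2) α} (hg : g.IsSymm) :
    g = !![g 0 0, g 0 1; g 0 1, g 1 1] := by
  conv_lhs => rw [eta_fin_two g]
  rw [hg.apply 0 1]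

/-- Completing the square: `a = √(-p)`, `b = -q / a`, `d = √(r + b²)`, where `r + b² > 0`
because `b² = q² / (-p)` and `p r < q²`. -/
theorem exists_upperTriangular_gram_eq {p q r : ℝ} (hp : p < 0) (hdet : p * r - q ^ 2 < 0) :
    ∃ a b d : ℝ, a * d ≠ 0 ∧
      !![p, q; q, r] = !![-a ^ 2, -(a * b); -(a * b), d ^ 2 - b ^ 2] := by
  set a := Real.sqrt (-p)
  have ha : 0 < a := Real.sqrt_pos.mpr (neg_pos.mpr hp)
  have ha_sq : a ^ 2 = -p := Real.sq_sqrt (neg_nonneg.mpr hp.le)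
  set b := -q / a
  have hab : a * b = -q := mul_div_cancel₀ _ ha.ne'
  have hrb : 0 < r + b ^ 2 := by nlinarith [congrArg (· ^ 2) hab]
  set d := Real.sqrt (r + b ^ 2)
  have hd : 0 < d := Real.sqrt_pos.mpr hrb
  have hd_sq : d ^ 2 = r + b ^ 2 := Real.sq_sqrt hrb.le
  refine ⟨a, b, d, (mul_pos ha hd).ne', ?_⟩
  rw [ha_sq, hab, hd_sq, neg_neg, neg_neg, add_sub_cancel_right]

/-- A 2×2 real symmetric matrix g can be written as g = êᵀ·diag(−1,1)·ê for some invertible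
upper-triangular 2×2 real matrix ê if and only if g₁₁ < 0 and det g < 0. -/
theorem stmt_6 (g : Matrix (Fin 2) (Fin 2) ℝ) (hg : g.IsSymm) :
    (∃ e : Matrix (Fin 2) (Fin 2) ℝ, e.det ≠ 0 ∧ e 1 0 = 0 ∧
        g = eᵀ * Matrix.diagonal ![(-1 : ℝ), 1] * e) ↔
      g 0 0 < 0 ∧ g.det < 0 := by
  constructor
  · rintro ⟨e, he, he10, rfl⟩
    obtain ⟨a, b, d, rfl⟩ : ∃ a b d : ℝ, e = !![a, b; 0, d] :=
      ⟨_, _, _, eq_upperTriangular_of_apply_one_zero e he10⟩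
    have had : a * d ≠ 0 := by simpa [det_fin_two] using he
    rw [transpose_mul_diagonal_mul_upperTriangular, det_fin_two_of]
    refine ⟨?_, ?_⟩
    · simpa using pow_two_pos_of_ne_zero (left_ne_zero_of_mul had)
    · nlinarith [mul_self_pos.mpr had]
  · rintro ⟨h00, hdet⟩
    rw [eq_of_isSymm_fin_two hg, det_fin_two_of, ← sq] at hdet
    obtain ⟨a, b, d, had, hgram⟩ := exists_upperTriangular_gram_eq h00 hdet
    refine ⟨!![a, b; 0, d], by simpa [det_fin_two] using had, rfl, ?_⟩
    rw [transpose_mul_diagonal_mul_upperTriangular, ← hgram]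
    exact eq_of_isSymm_fin_two hg
end

section
/- Let g be a positive-definite 3×3 real symmetric matrix, g8 a positive-definite 8×8 real symmetric matrix, c, A ∈ ℝ, and set f := (1 + A·c)² + A²·det g (which is automatically positive). Then U_Ω(A)ᵀ · M_C(g, g8, c) · U_Ω(A) = M_C( f^(−2/3)·g, f^(1/3)·g8, (c·(1 + A·c) + A·det g)/f ). This is the action of the spacelike Ω-shift duality on the metric and 3-form. -/
open Matrix

/-- The Ω-shift duality matrix: [[1, A·1], [0, 1]] on the first 6 coordinates,
identity on the 8 transverse coordinates. -/
def UOmega (A : ℝ) : Matrix ((Fin 3 ⊕ Fin 3) ⊕ Fin 8) ((Fin 3 ⊕ Fin 3) ⊕ Fin 8) ℝ :=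
  fromBlocks (fromBlocks 1 (A • 1) 0 1) 0 0 1

/-!
The shear `U_Ω(A)` is `u = [[1, A], [0, 1]]` tensored with `1₃` on the spacetime and dual
blocks, and there the metric is `g` tensored with `K(c, D) = [[1 + c²/D, c/D], [c/D, 1/D]]`,
`D = det g`; so `Uᵀ M_C U` is `g ⊗ uᵀ K u ⊕ g8` with the same prefactor. On the other side,
rescaling `g ↦ f^(-2/3) g` and `g8 ↦ f^(1/3) g8` multiplies `det g · det g8` by `f²`, hence the
prefactor by `f⁻¹`, which combines with the powers of `f` on the blocks to give `g ⊗ K' ⊕ g8`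
with `K' = [[1/f + f c'²/D, f c'/D], [f c'/D, f/D]]`, `c'` the new 3-form component. Finally
`uᵀ K u = K'` is a rational identity in `c`, `A`, `D`; both sides have determinant `1/D`, so only
the off-diagonal and lower-right entries really need checking.
-/

namespace Matrix

variable {R : Type*} [CommRing R] {n m : Type*} [Fintype n] [Fintype m] [DecidableEq m]

theorem fromBlocks_transpose_mul_fromBlocks_mul_fromBlocks (P X : Matrix n n R)
    (Y : Matrix m m R) :
    (fromBlocks P 0 0 1)ᵀ * fromBlocks X 0 0 Y * fromBlocks P 0 0 1 =
      fromBlocks (Pᵀ * X * P) 0 0 Y := by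
  simp [fromBlocks_transpose, fromBlocks_multiply]

/-- The Kronecker product of the symmetric `2 × 2` matrix `[[a, b], [b, d]]` with `g`. -/
def symBlocks (a b d : R) (g : Matrix n n R) : Matrix (n ⊕ n) (n ⊕ n) R :=
  fromBlocks (a • g) (b • g) (b • g) (d • g)

variable [DecidableEq n]

def shear (A : R) : Matrix (n ⊕ n) (n ⊕ n) R :=
  fromBlocks 1 (A • 1) 0 1

theorem shear_transpose_mul_symBlocks_mul_shear (A a b d : R) (g : Matrix n n R) :
    (shear A)ᵀ * symBlocks a b d g * shear A =
      symBlocks a (a * A + b) (A ^ 2 * a + 2 * A * b + d) g := by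
  simp only [shear, symBlocks, fromBlocks_transpose, fromBlocks_multiply, transpose_one,
    transpose_zero, transpose_smul, Matrix.one_mul, Matrix.mul_one, Matrix.zero_mul,
    Matrix.smul_mul, Matrix.mul_smul, Matrix.mul_zero, smul_zero, add_zero]
  congr 1 <;> module

end Matrix

theorem MC_eq_smul_fromBlocks (g : Matrix (Fin 3) (Fin 3) ℝ) (g8 : Matrix (Fin 8) (Fin 8) ℝ)
    (c : ℝ) :
    MC g g8 c = |g.det * g8.det| ^ (-(1 : ℝ) / 2) •
      fromBlocks (symBlocks (1 + c ^ 2 / g.det) (c / g.det) (1 / g.det) g) 0 0 g8 :=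
  rfl

theorem MC_inv_sq_smul_smul (g : Matrix (Fin 3) (Fin 3) ℝ) (g8 : Matrix (Fin 8) (Fin 8) ℝ)
    (c : ℝ) {t : ℝ} (ht : 0 < t) :
    MC ((t ^ 2)⁻¹ • g) (t • g8) c = |g.det * g8.det| ^ (-(1 : ℝ) / 2) •
      fromBlocks (symBlocks ((t ^ 3)⁻¹ + t ^ 3 * c ^ 2 / g.det) (t ^ 3 * c / g.det)
        (t ^ 3 / g.det) g) 0 0 g8 := by
  have hprefactor : |((t ^ 2)⁻¹ • g).det * (t • g8).det| ^ (-(1 : ℝ) / 2) =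
      t⁻¹ * |g.det * g8.det| ^ (-(1 : ℝ) / 2) := by
    have hdet : ((t ^ 2)⁻¹ • g).det * (t • g8).det = t ^ 2 * (g.det * g8.det) := by
      simp only [det_smul, Fintype.card_fin]
      field_simp
    rw [hdet, abs_mul, abs_of_pos (by positivity), Real.mul_rpow (by positivity) (abs_nonneg _),
      ← Real.rpow_natCast, ← Real.rpow_mul ht.le]
    norm_num [Real.rpow_neg_one]
  rw [MC_eq_smul_fromBlocks, hprefactor, mul_smul]
  simp only [symBlocks, fromBlocks_smul, smul_smul, smul_zero, det_smul, Fintype.card_fin]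
  congr 3 <;> field_simp

theorem MC_rpow_smul_rpow (g : Matrix (Fin 3) (Fin 3) ℝ) (g8 : Matrix (Fin 8) (Fin 8) ℝ)
    (c : ℝ) {f : ℝ} (hf : 0 < f) :
    MC (f ^ (-(2 : ℝ) / 3) • g) (f ^ ((1 : ℝ) / 3) • g8) c = |g.det * g8.det| ^ (-(1 : ℝ) / 2) •
      fromBlocks (symBlocks (f⁻¹ + f * c ^ 2 / g.det) (f * c / g.det) (f / g.det) g) 0 0 g8 := by
  set t := f ^ ((1 : ℝ) / 3)
  have ht : 0 < t := by positivity
  have ht_cube : t ^ 3 = f := by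
    rw [← Real.rpow_natCast, ← Real.rpow_mul hf.le]
    norm_num
  have hf_rpow : f ^ (-(2 : ℝ) / 3) = (t ^ 2)⁻¹ := by
    rw [← Real.rpow_natCast, ← Real.rpow_mul hf.le, ← Real.rpow_neg hf.le]
    norm_num
  rw [hf_rpow, MC_inv_sq_smul_smul g g8 c ht, ht_cube]

theorem UOmega_eq_fromBlocks_shear (A : ℝ) : UOmega A = fromBlocks (shear A) 0 0 1 :=
  rfl

theorem omegaShift_factor_pos (c A : ℝ) {D : ℝ} (hD : 0 < D) :
    0 < (1 + A * c) ^ 2 + A ^ 2 * D := by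
  rcases eq_or_ne A 0 with rfl | hA
  · norm_num
  · have := sq_pos_of_ne_zero hA
    positivity

theorem symBlocks_omegaShift {n : Type*} [Fintype n] (g : Matrix n n ℝ) (c A : ℝ) {D f : ℝ}
    (hD : D ≠ 0) (hf_def : f = (1 + A * c) ^ 2 + A ^ 2 * D) (hf : f ≠ 0) :
    symBlocks (1 + c ^ 2 / D) ((1 + c ^ 2 / D) * A + c / D)
        (A ^ 2 * (1 + c ^ 2 / D) + 2 * A * (c / D) + 1 / D) g =
      symBlocks (f⁻¹ + f * ((c * (1 + A * c) + A * D) / f) ^ 2 / D)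
        (f * ((c * (1 + A * c) + A * D) / f) / D) (f / D) g := by
  congr 1 <;> field_simp <;> subst hf_def <;> ring

theorem stmt_9_general (g : Matrix (Fin 3) (Fin 3) ℝ) (g8 : Matrix (Fin 8) (Fin 8) ℝ)
    (hg : g.PosDef) (c A : ℝ) :
    (UOmega A)ᵀ * MC g g8 c * UOmega A =
      MC (((1 + A * c) ^ 2 + A ^ 2 * g.det) ^ (-(2 : ℝ) / 3) • g)
        (((1 + A * c) ^ 2 + A ^ 2 * g.det) ^ ((1 : ℝ) / 3) • g8)
        ((c * (1 + A * c) + A * g.det) / ((1 + A * c) ^ 2 + A ^ 2 * g.det)) := by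
  have hf := omegaShift_factor_pos c A hg.det_pos
  rw [MC_rpow_smul_rpow g g8 _ hf, MC_eq_smul_fromBlocks, UOmega_eq_fromBlocks_shear,
    Matrix.mul_smul, Matrix.smul_mul, fromBlocks_transpose_mul_fromBlocks_mul_fromBlocks,
    shear_transpose_mul_symBlocks_mul_shear, symBlocks_omegaShift g c A hg.det_pos.ne' rfl hf.ne']

/-- Spacelike Ω-shift: for positive-definite g, g8 and f := (1+A·c)² + A²·det g,
U_Ω(A)ᵀ·M_C(g,g8,c)·U_Ω(A) = M_C(f^(−2/3)·g, f^(1/3)·g8, (c·(1+A·c)+A·det g)/f). -/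
theorem stmt_9 (g : Matrix (Fin 3) (Fin 3) ℝ) (g8 : Matrix (Fin 8) (Fin 8) ℝ)
    (hg : g.PosDef) (hg8 : g8.PosDef) (c A : ℝ) :
    (UOmega A)ᵀ * MC g g8 c * UOmega A =
      MC (((1 + A * c) ^ 2 + A ^ 2 * g.det) ^ (-(2 : ℝ) / 3) • g)
        (((1 + A * c) ^ 2 + A ^ 2 * g.det) ^ ((1 : ℝ) / 3) • g8)
        ((c * (1 + A * c) + A * g.det) / ((1 + A * c) ^ 2 + A ^ 2 * g.det)) :=
  stmt_9_general g g8 hg c A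
end

section
/- Let g be a positive-definite 3×3 real symmetric matrix, g8 a positive-definite 8×8 real symmetric matrix, c ∈ ℝ, A ≠ 0, and set D := A²·(c² + det g) (which is positive). Then U_B(A)ᵀ · M_C(g, g8, c) · U_B(A) = M_C( D^(−2/3)·g, D^(1/3)·g8, −c/D ). This is the action of the spacelike Buscher duality on the metric and 3-form. -/
open Matrix

/-- The Buscher duality matrix: [[0, A·1], [−(1/A)·1, 0]] on the first 6 coordinates,
identity on the 8 transverse coordinates. -/
noncomputable def UB (A : ℝ) : Matrix ((Fin 3 ⊕ Fin 3) ⊕ Fin 8) ((Fin 3 ⊕ Fin 3) ⊕ Fin 8) ℝ :=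
  fromBlocks (fromBlocks 0 (A • 1) ((-(1 / A)) • 1) 0) 0 0 1

/-- Determinant of a scalar multiple (instance-aligned version). -/
lemma mydet_smul {n : Type*} [DecidableEq n] [Fintype n] (a : ℝ) (M : Matrix n n ℝ) :
    (a • M).det = a ^ (Fintype.card n) * M.det := Matrix.det_smul M a

lemma scalar1 (S t A c d : ℝ) (hA : A ≠ 0) (hd : d ≠ 0) (ht : t ≠ 0) (hcd : c ^ 2 + d ≠ 0)
    (ht3 : t ^ 3 = A ^ 2 * (c ^ 2 + d)) :
    -(1 / A) * (S * (1 / d) * -(1 / A)) =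
      1 / t * S * ((1 + (-c / (A ^ 2 * (c ^ 2 + d))) ^ 2 / (1 / t ^ 6 * d)) * (1 / t ^ 2)) := by
  have expand : 1 / t * S * ((1 + (-c / (A ^ 2 * (c ^ 2 + d))) ^ 2 / (1 / t ^ 6 * d)) * (1 / t ^ 2))
      = S * (1 / t ^ 3 + c ^ 2 * t ^ 3 / ((A ^ 2 * (c ^ 2 + d)) ^ 2 * d)) := by
    field_simp
  rw [expand, ht3]
  field_simp
  ring

lemma scalar2 (S t A c d : ℝ) (hA : A ≠ 0) (hd : d ≠ 0) (ht : t ≠ 0) (hcd : c ^ 2 + d ≠ 0)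
    (ht3 : t ^ 3 = A ^ 2 * (c ^ 2 + d)) :
    A * (S * (c / d) * -(1 / A)) =
      1 / t * S * (-c / (A ^ 2 * (c ^ 2 + d)) / (1 / t ^ 6 * d) * (1 / t ^ 2)) := by
  rw [← ht3]
  field_simp

lemma scalar3 (S t A c d : ℝ) (hA : A ≠ 0) (hd : d ≠ 0) (ht : t ≠ 0) (hcd : c ^ 2 + d ≠ 0)
    (ht3 : t ^ 3 = A ^ 2 * (c ^ 2 + d)) :
    -(1 / A) * (S * (c / d) * A) =
      1 / t * S * (-c / (A ^ 2 * (c ^ 2 + d)) / (1 / t ^ 6 * d) * (1 / t ^ 2)) := by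
  rw [← ht3]
  field_simp

lemma scalar4 (S t A c d : ℝ) (hA : A ≠ 0) (hd : d ≠ 0) (ht : t ≠ 0) (hcd : c ^ 2 + d ≠ 0)
    (ht3 : t ^ 3 = A ^ 2 * (c ^ 2 + d)) :
    A * (S * (1 + c ^ 2 / d) * A) = 1 / t * S * (1 / (1 / t ^ 6 * d) * (1 / t ^ 2)) := by
  have expand : 1 / t * S * (1 / (1 / t ^ 6 * d) * (1 / t ^ 2)) = S * (t ^ 3 / d) := by
    field_simp
  rw [expand, ht3]
  field_simp
  ring

lemma scalar5 (S t : ℝ) (ht : t ≠ 0) : S = 1 / t * S * t := by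
  field_simp

/-- Spacelike Buscher duality: for positive-definite g, g8, A ≠ 0 and
D := A²·(c² + det g), U_B(A)ᵀ·M_C(g,g8,c)·U_B(A) = M_C(D^(−2/3)·g, D^(1/3)·g8, −c/D). -/
theorem stmt_10 (g : Matrix (Fin 3) (Fin 3) ℝ) (g8 : Matrix (Fin 8) (Fin 8) ℝ)
    (hg : g.PosDef) (hg8 : g8.PosDef) (c A : ℝ) (hA : A ≠ 0) :
    (UB A)ᵀ * MC g g8 c * UB A =
      MC ((A ^ 2 * (c ^ 2 + g.det)) ^ (-(2 : ℝ) / 3) • g)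
        ((A ^ 2 * (c ^ 2 + g.det)) ^ ((1 : ℝ) / 3) • g8)
        (-c / (A ^ 2 * (c ^ 2 + g.det))) := by
  have hd := hg.det_pos
  have hh := hg8.det_pos
  have hcd : (0:ℝ) < c ^ 2 + g.det := add_pos_of_nonneg_of_pos (sq_nonneg c) hd
  have hD : (0:ℝ) < A ^ 2 * (c ^ 2 + g.det) := by positivity
  simp only [MC, UB, mydet_smul, Fintype.card_fin, Matrix.fromBlocks_transpose,
    Matrix.transpose_smul, Matrix.transpose_one, Matrix.transpose_zero, Matrix.mul_smul,
    Matrix.smul_mul, Matrix.fromBlocks_multiply, Matrix.mul_one, Matrix.one_mul,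
    Matrix.mul_zero, Matrix.zero_mul, add_zero, zero_add, smul_smul,
    Matrix.fromBlocks_smul, smul_zero]
  set t := (A ^ 2 * (c ^ 2 + g.det)) ^ ((1:ℝ)/3) with htdef
  have ht : (0:ℝ) < t := Real.rpow_pos_of_pos hD _
  have ht3 : t ^ (3:ℕ) = A ^ 2 * (c ^ 2 + g.det) := by
    rw [htdef, ← Real.rpow_natCast ((A ^ 2 * (c ^ 2 + g.det)) ^ ((1:ℝ)/3)) 3,
      ← Real.rpow_mul hD.le]
    norm_num
  have e1 : (A ^ 2 * (c ^ 2 + g.det)) ^ (-(2:ℝ)/3) = 1 / t ^ 2 := by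
    rw [htdef, ← Real.rpow_natCast ((A ^ 2 * (c ^ 2 + g.det)) ^ ((1:ℝ)/3)) 2,
      ← Real.rpow_mul hD.le, one_div, ← Real.rpow_neg hD.le]
    norm_num
  have e3 : ((A ^ 2 * (c ^ 2 + g.det)) ^ (-(2:ℝ)/3)) ^ (3:ℕ) = 1 / t ^ 6 := by
    rw [← Real.rpow_natCast ((A ^ 2 * (c ^ 2 + g.det)) ^ (-(2:ℝ)/3)) 3,
      ← Real.rpow_mul hD.le, htdef,
      ← Real.rpow_natCast ((A ^ 2 * (c ^ 2 + g.det)) ^ ((1:ℝ)/3)) 6,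
      ← Real.rpow_mul hD.le, one_div, ← Real.rpow_neg hD.le]
    norm_num
  have eabs : |1 / t ^ 6 * g.det * (t ^ 8 * g8.det)| ^ (-(1:ℝ)/2)
      = 1 / t * |g.det * g8.det| ^ (-(1:ℝ)/2) := by
    have h1 : 1 / t ^ 6 * g.det * (t ^ 8 * g8.det) = t ^ 2 * (g.det * g8.det) := by
      field_simp
    rw [h1, abs_of_pos (mul_pos (pow_pos ht 2) (mul_pos hd hh)), abs_of_pos (mul_pos hd hh),
      Real.mul_rpow (pow_pos ht 2).le (mul_pos hd hh).le]
    congr 1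
    rw [← Real.rpow_natCast t 2, ← Real.rpow_mul ht.le]
    norm_num [Real.rpow_neg_one]
  rw [e3, e1, eabs]
  rw [Matrix.fromBlocks_inj]
  refine ⟨?_, rfl, rfl, ?_⟩
  · rw [Matrix.fromBlocks_inj]
    refine ⟨?_, ?_, ?_, ?_⟩ <;> congr 1
    · exact scalar1 _ t A c g.det hA hd.ne' ht.ne' hcd.ne' ht3
    · exact scalar2 _ t A c g.det hA hd.ne' ht.ne' hcd.ne' ht3
    · exact scalar3 _ t A c g.det hA hd.ne' ht.ne' hcd.ne' ht3
    · exact scalar4 _ t A c g.det hA hd.ne' ht.ne' hcd.ne' ht3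
  · congr 1
    exact scalar5 _ t ht.ne'
end

section
/- Let g be a Lorentzian 3×3 real symmetric matrix, g8 an invertible 8×8 real symmetric matrix, c, A ∈ ℝ, and set f := (1 + A·c)² − A²·|g|. If f ≤ 0, then there exist no invertible 3×3 real symmetric matrix g', invertible 8×8 real symmetric matrix g8' and c' ∈ ℝ such that U_Ω(A)ᵀ · M_C(g, g8, c) · U_Ω(A) = M_C(g', g8', c'): after such a timelike Ω-shift the dual background cannot be described by a metric and 3-form alone. -/
/-!
Compare the dual–dual 3×3 blocks of both sides. For `M_C(g', g8', c')` this block is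
`(s' / det g') • g'` with `s' > 0`, whose determinant `s'³ / (det g')²` is positive. For the
Ω-shifted `M_C(g, g8, c)` it is `s • (A² + (1 + A c)² / det g) • g`; the scalar equals
`s · f / det g ≥ 0` because `f ≤ 0` and `det g < 0`, so its determinant has the sign of
`det g` and is `≤ 0`.
-/

open Matrix

def dualBlock (M : Matrix ((Fin 3 ⊕ Fin 3) ⊕ Fin 8) ((Fin 3 ⊕ Fin 3) ⊕ Fin 8) ℝ) :
    Matrix (Fin 3) (Fin 3) ℝ :=
  M.toBlocks₁₁.toBlocks₂₂

theorem dualBlock_MC (g : Matrix (Fin 3) (Fin 3) ℝ) (g8 : Matrix (Fin 8) (Fin 8) ℝ) (c : ℝ) :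
    dualBlock (MC g g8 c) = (|g.det * g8.det| ^ (-(1 : ℝ) / 2) / g.det) • g := by
  simp [dualBlock, MC, fromBlocks_smul, smul_smul, div_eq_mul_inv]

theorem dualBlock_UOmega_conj_MC (g : Matrix (Fin 3) (Fin 3) ℝ) (g8 : Matrix (Fin 8) (Fin 8) ℝ)
    (c A : ℝ) :
    dualBlock ((UOmega A)ᵀ * MC g g8 c * UOmega A) =
      (|g.det * g8.det| ^ (-(1 : ℝ) / 2) * (A ^ 2 + (1 + A * c) ^ 2 / g.det)) • g := by
  simp only [dualBlock, UOmega, fromBlocks_transpose, transpose_one, transpose_zero, transpose_smul,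
    MC, fromBlocks_smul, smul_zero, fromBlocks_multiply, Matrix.mul_one, Matrix.one_mul,
    Matrix.mul_zero, Matrix.zero_mul, Matrix.mul_smul, Matrix.smul_mul, add_zero, zero_add,
    toBlocks_fromBlocks₁₁, toBlocks_fromBlocks₂₂]
  simp only [smul_smul, ← add_smul]
  congr 1
  ring

theorem det_dualBlock_MC_pos {g : Matrix (Fin 3) (Fin 3) ℝ} {g8 : Matrix (Fin 8) (Fin 8) ℝ}
    (hg : g.det ≠ 0) (hg8 : g8.det ≠ 0) (c : ℝ) : 0 < (dualBlock (MC g g8 c)).det := by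
  set s := |g.det * g8.det| ^ (-(1 : ℝ) / 2)
  have hdet : (s / g.det) ^ 3 * g.det = s ^ 3 / g.det ^ 2 := by field_simp
  rw [dualBlock_MC, det_smul, Fintype.card_fin, hdet]
  positivity

theorem det_dualBlock_UOmega_conj_MC_nonpos {g : Matrix (Fin 3) (Fin 3) ℝ} (hg : g.det < 0)
    (g8 : Matrix (Fin 8) (Fin 8) ℝ) {c A : ℝ} (hf : (1 + A * c) ^ 2 - A ^ 2 * (-g.det) ≤ 0) :
    (dualBlock ((UOmega A)ᵀ * MC g g8 c * UOmega A)).det ≤ 0 := by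
  have hε : 0 ≤ A ^ 2 + (1 + A * c) ^ 2 / g.det := by
    have : -A ^ 2 ≤ (1 + A * c) ^ 2 / g.det := by rw [le_div_iff_of_neg hg]; linarith
    linarith
  rw [dualBlock_UOmega_conj_MC, det_smul, Fintype.card_fin]
  exact mul_nonpos_of_nonneg_of_nonpos (by positivity) hg.le

theorem stmt_12_general (g : Matrix (Fin 3) (Fin 3) ℝ) (g8 : Matrix (Fin 8) (Fin 8) ℝ)
    (hg : Lorentzian3 g) (c A : ℝ)
    (hf : (1 + A * c) ^ 2 - A ^ 2 * (-g.det) ≤ 0) :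
    ¬ ∃ (g' : Matrix (Fin 3) (Fin 3) ℝ) (g8' : Matrix (Fin 8) (Fin 8) ℝ) (c' : ℝ),
        g'.IsSymm ∧ g'.det ≠ 0 ∧ g8'.IsSymm ∧ g8'.det ≠ 0 ∧
        (UOmega A)ᵀ * MC g g8 c * UOmega A = MC g' g8' c' := by
  rintro ⟨g', g8', c', -, hg', -, hg8', h⟩
  have hnonpos := det_dualBlock_UOmega_conj_MC_nonpos hg.det_neg g8 hf
  rw [h] at hnonpos
  exact hnonpos.not_gt (det_dualBlock_MC_pos hg' hg8' c')

/-- Timelike Ω-shift with f := (1+A·c)² − A²·|g| ≤ 0: the dual background cannot be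
described by a metric and 3-form alone. -/
theorem stmt_12 (g : Matrix (Fin 3) (Fin 3) ℝ) (g8 : Matrix (Fin 8) (Fin 8) ℝ)
    (hg : Lorentzian3 g) (hg8 : g8.IsSymm) (hg8det : g8.det ≠ 0) (c A : ℝ)
    (hf : (1 + A * c) ^ 2 - A ^ 2 * (-g.det) ≤ 0) :
    ¬ ∃ (g' : Matrix (Fin 3) (Fin 3) ℝ) (g8' : Matrix (Fin 8) (Fin 8) ℝ) (c' : ℝ),
        g'.IsSymm ∧ g'.det ≠ 0 ∧ g8'.IsSymm ∧ g8'.det ≠ 0 ∧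
        (UOmega A)ᵀ * MC g g8 c * UOmega A = MC g' g8' c' :=
  stmt_12_general g g8 hg c A hf
end

section
/- Let g be a Lorentzian 3×3 real symmetric matrix, g8 a positive-definite 8×8 real symmetric matrix, c, A ∈ ℝ, set V := c/√|g|, and let θ ∈ ℝ satisfy p := cosh θ + V·sinh θ > 0. Then U_Ω(A)ᵀ · M_C(g, g8, c) · U_Ω(A) = M_check( p^(4/3)·g, p^(−2/3)·g8, √|g|·p·(V·cosh θ + sinh θ), (A·√|g|·cosh θ + (1 + A·c)·sinh θ)/(√|g|·p) ). In particular the dual fields of the timelike Ω-shift form a one-parameter family, indexed by the local SO(1,1) angle θ, all describing the same generalised metric. -/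
open Matrix

/-- The checked-frame generalised metric, with both a 3-form c and a trivector ω. -/
noncomputable def Mcheck (g : Matrix (Fin 3) (Fin 3) ℝ) (g8 : Matrix (Fin 8) (Fin 8) ℝ)
    (c ω : ℝ) : Matrix ((Fin 3 ⊕ Fin 3) ⊕ Fin 8) ((Fin 3 ⊕ Fin 3) ⊕ Fin 8) ℝ :=
  |g.det * g8.det| ^ (-(1 : ℝ) / 2) •
    fromBlocks
      (fromBlocks ((1 + c ^ 2 / g.det) • g)
        ((ω + c * (1 + c * ω) / g.det) • g)
        ((ω + c * (1 + c * ω) / g.det) • g)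
        ((ω ^ 2 + (1 + c * ω) ^ 2 / g.det) • g))
      0 0 g8

/-!
The Ω-shift by `A` turns `M_C(g, g8, c)` into `M_check(g, g8, c, A)`, so it suffices to show that
`M_check` is unchanged under `(g, g8, c, A) ↦ (p^(4/3) g, p^(-2/3) g8, c', ω')`, where `c'`, `ω'`
are the dual fields of the statement.
Write `det g = -s²`. The `2 × 2` coefficient block of `M_check(g, g8, c, ω)` is the Gram matrix,
for the Minkowski pairing `x₁y₁ - x₂y₂`, of the frame `e₁ = (1, c/s)`, `e₂ = (ω, (1 + cω)/s)`.
Rescaling `(g, g8)` by powers of `p` multiplies this block by `p²` and replaces `s` by `p² s`,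
and the boost by `θ` maps the frame of `(c, A, s)` to `p` times the frame of `(c', ω', p² s)`;
boosts preserve the pairing, so the two Gram matrices agree.
-/

theorem prod_neg_of_ncard_neg_eq_one {ι : Type*} [Fintype ι] {f : ι → ℝ}
    (hneg : {i | f i < 0}.ncard = 1) (hpos : {i | 0 < f i}.ncard = Nat.card ι - 1) :
    ∏ i, f i < 0 := by
  classical
  obtain ⟨a, ha⟩ := Set.ncard_eq_one.mp hneg
  have hfa : f a < 0 := by simpa using ha.symm.subset rfl
  have hpos_eq : {i | 0 < f i} = {a}ᶜ := by
    refine Set.eq_of_subset_of_ncard_le (fun i hi hia => ?_) ?_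
    · rw [Set.mem_singleton_iff.mp hia] at hi
      exact lt_asymm hfa hi
    · rw [Set.ncard_compl, Set.ncard_singleton, hpos]
  rw [Fintype.prod_eq_mul_prod_compl a]
  refine mul_neg_of_neg_of_pos hfa (Finset.prod_pos fun i hi => ?_)
  exact hpos_eq.symm.subset (by simpa using hi)

theorem conj_shear_fromBlocks_smul {R n : Type*} [CommSemiring R] [Fintype n] [DecidableEq n]
    (g : Matrix n n R) (A a b d : R) :
    (fromBlocks 1 (A • 1) 0 1)ᵀ * fromBlocks (a • g) (b • g) (b • g) (d • g) *
        fromBlocks 1 (A • 1) 0 1 =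
      fromBlocks (a • g) ((a * A + b) • g) ((a * A + b) • g)
        ((a * A ^ 2 + 2 * A * b + d) • g) := by
  simp only [fromBlocks_transpose, transpose_one, transpose_smul, transpose_zero,
    fromBlocks_multiply, Matrix.one_mul, Matrix.mul_one, Matrix.zero_mul, Matrix.mul_zero,
    add_zero, smul_mul, Matrix.mul_smul, smul_smul, ← add_smul]
  congr 1 <;> module

theorem conj_fromBlocks_one_smul_fromBlocks_zero {R m n : Type*} [CommSemiring R] [Fintype m]
    [Fintype n] [DecidableEq n] (U X : Matrix m m R) (Y : Matrix n n R) (k : R) :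
    (fromBlocks U 0 0 1)ᵀ * (k • fromBlocks X 0 0 Y) * fromBlocks U 0 0 1 =
      k • fromBlocks (Uᵀ * X * U) 0 0 Y := by
  simp [fromBlocks_transpose, fromBlocks_multiply]

theorem UOmega_transpose_mul_MC_mul_UOmega (g : Matrix (Fin 3) (Fin 3) ℝ)
    (g8 : Matrix (Fin 8) (Fin 8) ℝ) (c A : ℝ) :
    (UOmega A)ᵀ * MC g g8 c * UOmega A = Mcheck g g8 c A := by
  rw [UOmega, MC, conj_fromBlocks_one_smul_fromBlocks_zero, conj_shear_fromBlocks_smul, Mcheck]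
  congr 4 <;> ring

theorem abs_det_rpow_smul_mul_det_rpow_smul {p : ℝ} (hp : 0 < p) (g : Matrix (Fin 3) (Fin 3) ℝ)
    (g8 : Matrix (Fin 8) (Fin 8) ℝ) :
    |(p ^ ((4 : ℝ) / 3) • g).det * (p ^ (-(2 : ℝ) / 3) • g8).det| ^ (-(1 : ℝ) / 2) =
      |g.det * g8.det| ^ (-(1 : ℝ) / 2) * p ^ ((2 : ℝ) / 3) := by
  have hpow : (p ^ ((4 : ℝ) / 3)) ^ 3 * (p ^ (-(2 : ℝ) / 3)) ^ 8 = p ^ (-(4 : ℝ) / 3) := by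
    rw [← Real.rpow_natCast, ← Real.rpow_natCast, ← Real.rpow_mul hp.le,
      ← Real.rpow_mul hp.le, ← Real.rpow_add hp]
    norm_num
  rw [det_smul, det_smul, Fintype.card_fin, Fintype.card_fin, mul_mul_mul_comm, hpow, abs_mul,
    abs_of_pos (Real.rpow_pos_of_pos hp _), mul_comm,
    Real.mul_rpow (abs_nonneg _) (Real.rpow_nonneg hp.le _), ← Real.rpow_mul hp.le]
  norm_num

theorem Mcheck_eq_Mcheck_rpow_smul {p : ℝ} (hp : 0 < p) (g : Matrix (Fin 3) (Fin 3) ℝ)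
    (g8 : Matrix (Fin 8) (Fin 8) ℝ) {c ω c' ω' : ℝ}
    (h₁ : 1 + c ^ 2 / g.det = p ^ 2 * (1 + c' ^ 2 / (p ^ 4 * g.det)))
    (h₂ : ω + c * (1 + c * ω) / g.det = p ^ 2 * (ω' + c' * (1 + c' * ω') / (p ^ 4 * g.det)))
    (h₃ : ω ^ 2 + (1 + c * ω) ^ 2 / g.det =
      p ^ 2 * (ω' ^ 2 + (1 + c' * ω') ^ 2 / (p ^ 4 * g.det))) :
    Mcheck g g8 c ω = Mcheck (p ^ ((4 : ℝ) / 3) • g) (p ^ (-(2 : ℝ) / 3) • g8) c' ω' := by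
  have hdet : (p ^ ((4 : ℝ) / 3) • g).det = p ^ 4 * g.det := by
    rw [det_smul, Fintype.card_fin, ← Real.rpow_natCast, ← Real.rpow_mul hp.le]
    norm_num
  have hscale : p ^ ((2 : ℝ) / 3) * p ^ ((4 : ℝ) / 3) = p ^ 2 := by
    rw [← Real.rpow_add hp]; norm_num
  have hcancel : p ^ ((2 : ℝ) / 3) * p ^ (-(2 : ℝ) / 3) = 1 := by
    rw [← Real.rpow_add hp]; norm_num
  rw [Mcheck, Mcheck, abs_det_rpow_smul_mul_det_rpow_smul hp, hdet, mul_smul]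
  congr 1
  simp only [fromBlocks_smul, smul_smul, smul_zero]
  congr 3
  · rw [h₁, ← hscale]; ring
  · rw [h₂, ← hscale]; ring
  · rw [h₂, ← hscale]; ring
  · rw [h₃, ← hscale]; ring
  · rw [hcancel, one_smul]

noncomputable section

def lorentzPairing (x y : ℝ × ℝ) : ℝ := x.1 * y.1 - x.2 * y.2

def lorentzBoost (θ : ℝ) (x : ℝ × ℝ) : ℝ × ℝ :=
  (Real.cosh θ * x.1 + Real.sinh θ * x.2, Real.sinh θ * x.1 + Real.cosh θ * x.2)

theorem lorentzPairing_lorentzBoost (θ : ℝ) (x y : ℝ × ℝ) :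
    lorentzPairing (lorentzBoost θ x) (lorentzBoost θ y) = lorentzPairing x y := by
  simp only [lorentzPairing, lorentzBoost]
  linear_combination (x.1 * y.1 - x.2 * y.2) * Real.cosh_sq_sub_sinh_sq θ

theorem lorentzPairing_eq_of_lorentzBoost_eq_smul {θ p : ℝ} {x y x' y' : ℝ × ℝ}
    (hx : lorentzBoost θ x = p • x') (hy : lorentzBoost θ y = p • y') :
    lorentzPairing x y = p ^ 2 * lorentzPairing x' y' := by
  rw [← lorentzPairing_lorentzBoost θ, hx, hy, lorentzPairing, lorentzPairing]
  simp only [Prod.smul_fst, Prod.smul_snd, smul_eq_mul]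
  ring

def checkedFrame₁ (c s : ℝ) : ℝ × ℝ := (1, c / s)

def checkedFrame₂ (c ω s : ℝ) : ℝ × ℝ := (ω, (1 + c * ω) / s)

section CheckedFrame

variable {c ω s : ℝ}

theorem lorentzPairing_checkedFrame₁₁ :
    lorentzPairing (checkedFrame₁ c s) (checkedFrame₁ c s) = 1 + c ^ 2 / -s ^ 2 := by
  simp only [lorentzPairing, checkedFrame₁]
  ring

theorem lorentzPairing_checkedFrame₁₂ :
    lorentzPairing (checkedFrame₁ c s) (checkedFrame₂ c ω s) =
      ω + c * (1 + c * ω) / -s ^ 2 := by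
  simp only [lorentzPairing, checkedFrame₁, checkedFrame₂]
  ring

theorem lorentzPairing_checkedFrame₂₂ :
    lorentzPairing (checkedFrame₂ c ω s) (checkedFrame₂ c ω s) =
      ω ^ 2 + (1 + c * ω) ^ 2 / -s ^ 2 := by
  simp only [lorentzPairing, checkedFrame₂]
  ring

end CheckedFrame

section Boost

variable {θ c A s p c' ω' : ℝ}

theorem lorentzBoost_checkedFrame₁ (hs : s ≠ 0) (hp₀ : p ≠ 0)
    (hp : p = Real.cosh θ + c / s * Real.sinh θ)
    (hc' : c' = s * p * (c / s * Real.cosh θ + Real.sinh θ)) :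
    lorentzBoost θ (checkedFrame₁ c s) = p • checkedFrame₁ c' (p ^ 2 * s) := by
  subst hc'
  simp only [lorentzBoost, checkedFrame₁, Prod.smul_mk, smul_eq_mul]
  ext
  · rw [hp]; ring
  · field_simp; ring

theorem lorentzBoost_checkedFrame₂ (hs : s ≠ 0) (hp₀ : p ≠ 0)
    (hp : p = Real.cosh θ + c / s * Real.sinh θ)
    (hc' : c' = s * p * (c / s * Real.cosh θ + Real.sinh θ))
    (hω' : ω' = (A * s * Real.cosh θ + (1 + A * c) * Real.sinh θ) / (s * p)) :
    lorentzBoost θ (checkedFrame₂ c A s) = p • checkedFrame₂ c' ω' (p ^ 2 * s) := by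
  subst hc' hω'
  simp only [lorentzBoost, checkedFrame₂, Prod.smul_mk, smul_eq_mul]
  ext
  · field_simp
  · field_simp
    rw [hp]
    field_simp
    linear_combination s * Real.cosh_sq_sub_sinh_sq θ

theorem Mcheck_eq_Mcheck_lorentzBoost (g : Matrix (Fin 3) (Fin 3) ℝ)
    (g8 : Matrix (Fin 8) (Fin 8) ℝ) (hs : s ≠ 0) (hD : g.det = -s ^ 2) (hp₀ : 0 < p)
    (hp : p = Real.cosh θ + c / s * Real.sinh θ)
    (hc' : c' = s * p * (c / s * Real.cosh θ + Real.sinh θ))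
    (hω' : ω' = (A * s * Real.cosh θ + (1 + A * c) * Real.sinh θ) / (s * p)) :
    Mcheck g g8 c A = Mcheck (p ^ ((4 : ℝ) / 3) • g) (p ^ (-(2 : ℝ) / 3) • g8) c' ω' := by
  have hD' : p ^ 4 * g.det = -(p ^ 2 * s) ^ 2 := by rw [hD]; ring
  have h₁ := lorentzBoost_checkedFrame₁ hs hp₀.ne' hp hc'
  have h₂ := lorentzBoost_checkedFrame₂ hs hp₀.ne' hp hc' hω'
  apply Mcheck_eq_Mcheck_rpow_smul hp₀ <;> rw [hD', hD]
  · rw [← lorentzPairing_checkedFrame₁₁, ← lorentzPairing_checkedFrame₁₁]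
    exact lorentzPairing_eq_of_lorentzBoost_eq_smul h₁ h₁
  · rw [← lorentzPairing_checkedFrame₁₂, ← lorentzPairing_checkedFrame₁₂]
    exact lorentzPairing_eq_of_lorentzBoost_eq_smul h₁ h₂
  · rw [← lorentzPairing_checkedFrame₂₂, ← lorentzPairing_checkedFrame₂₂]
    exact lorentzPairing_eq_of_lorentzBoost_eq_smul h₂ h₂

end Boost

end

theorem stmt_13_general (g : Matrix (Fin 3) (Fin 3) ℝ) (g8 : Matrix (Fin 8) (Fin 8) ℝ)
    (hg : Lorentzian3 g) (c A θ : ℝ)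
    (hp : 0 < Real.cosh θ + c / Real.sqrt (-g.det) * Real.sinh θ) :
    (UOmega A)ᵀ * MC g g8 c * UOmega A =
      Mcheck
        ((Real.cosh θ + c / Real.sqrt (-g.det) * Real.sinh θ) ^ ((4 : ℝ) / 3) • g)
        ((Real.cosh θ + c / Real.sqrt (-g.det) * Real.sinh θ) ^ (-(2 : ℝ) / 3) • g8)
        (Real.sqrt (-g.det) * (Real.cosh θ + c / Real.sqrt (-g.det) * Real.sinh θ) *
          (c / Real.sqrt (-g.det) * Real.cosh θ + Real.sinh θ))
        ((A * Real.sqrt (-g.det) * Real.cosh θ + (1 + A * c) * Real.sinh θ) /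
          (Real.sqrt (-g.det) * (Real.cosh θ + c / Real.sqrt (-g.det) * Real.sinh θ))) := by
  have hD : 0 < -g.det := neg_pos.2 hg.det_neg
  rw [UOmega_transpose_mul_MC_mul_UOmega]
  exact Mcheck_eq_Mcheck_lorentzBoost g g8 (Real.sqrt_pos.2 hD).ne'
    (by rw [Real.sq_sqrt hD.le, neg_neg]) hp rfl rfl rfl

/-- Timelike Ω-shift in the checked frame: for Lorentzian g, positive-definite g8,
V := c/√|g| and any θ with p := cosh θ + V·sinh θ > 0, the dual generalised metric equals
M_check(p^(4/3)·g, p^(−2/3)·g8, √|g|·p·(V·cosh θ + sinh θ),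
(A·√|g|·cosh θ + (1+A·c)·sinh θ)/(√|g|·p)): a one-parameter family of dual fields. -/
theorem stmt_13 (g : Matrix (Fin 3) (Fin 3) ℝ) (g8 : Matrix (Fin 8) (Fin 8) ℝ)
    (hg : Lorentzian3 g) (hg8 : g8.PosDef) (c A θ : ℝ)
    (hp : 0 < Real.cosh θ + c / Real.sqrt (-g.det) * Real.sinh θ) :
    (UOmega A)ᵀ * MC g g8 c * UOmega A =
      Mcheck
        ((Real.cosh θ + c / Real.sqrt (-g.det) * Real.sinh θ) ^ ((4 : ℝ) / 3) • g)
        ((Real.cosh θ + c / Real.sqrt (-g.det) * Real.sinh θ) ^ (-(2 : ℝ) / 3) • g8)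
        (Real.sqrt (-g.det) * (Real.cosh θ + c / Real.sqrt (-g.det) * Real.sinh θ) *
          (c / Real.sqrt (-g.det) * Real.cosh θ + Real.sinh θ))
        ((A * Real.sqrt (-g.det) * Real.cosh θ + (1 + A * c) * Real.sinh θ) /
          (Real.sqrt (-g.det) * (Real.cosh θ + c / Real.sqrt (-g.det) * Real.sinh θ))) :=
  stmt_13_general g g8 hg c A θ hp
end

section
/- Let g be an invertible 3×3 real symmetric matrix, g8 an invertible 8×8 real symmetric matrix, c ∈ ℝ and A ≠ 0. Then U_B(A)ᵀ · M_C(g, g8, c) · U_B(A) = |det g · det g8|^(−1/2) · blockdiag( [[(1/(A²·det g))·g, −(c/det g)·g], [−(c/det g)·g, A²·(1 + c²/det g)·g]], g8 ). In particular, for Lorentzian g the spacetime block of the Buscher-dualised generalised metric is a negative multiple of g, yet this does not correspond to a signature change of the spacetime metric. -/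
/-! The Buscher matrix only mixes the spacetime and dual directions, swapping them with weights
`A` and `-1/A`; conjugating any 2×2 block matrix `[[P, Q], [R, S]]` by it gives
`[[S/A², -R], [-Q, A²P]]`, the off-diagonal signs coming from `A · (-1/A) = -1`. The overall
density factor and the transverse block `g8` are carried along unchanged. -/

open Matrix

namespace Matrix

theorem transpose_fromBlocks_mul_fromBlocks_mul_fromBlocks_one
    {R m n : Type*} [CommRing R] [Fintype m] [Fintype n] [DecidableEq n]
    (U X : Matrix m m R) (Y : Matrix n n R) :
    (fromBlocks U 0 0 1)ᵀ * fromBlocks X 0 0 Y * fromBlocks U 0 0 1 =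
      fromBlocks (Uᵀ * X * U) 0 0 Y := by
  rw [fromBlocks_transpose, fromBlocks_multiply, fromBlocks_multiply]
  simp only [transpose_zero, transpose_one,
    Matrix.mul_zero, Matrix.zero_mul, Matrix.mul_one, Matrix.one_mul, add_zero, zero_add]

theorem transpose_buscher_mul_fromBlocks_mul_buscher
    {K n : Type*} [Field K] [Fintype n] [DecidableEq n] {A : K} (hA : A ≠ 0)
    (P Q R S : Matrix n n K) :
    (fromBlocks 0 (A • 1) ((-(1 / A)) • 1) 0)ᵀ * fromBlocks P Q R S *
        fromBlocks 0 (A • 1) ((-(1 / A)) • 1) 0 =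
      fromBlocks ((1 / A ^ 2) • S) (-R) (-Q) (A ^ 2 • P) := by
  simp only [fromBlocks_transpose, transpose_zero, transpose_smul, transpose_one,
    fromBlocks_multiply, Matrix.zero_mul, Matrix.mul_zero, Matrix.smul_mul, Matrix.mul_smul,
    Matrix.one_mul, Matrix.mul_one, zero_add, add_zero, smul_smul]
  congr 1
  · congr 1; ring
  · rw [mul_neg, mul_one_div_cancel hA, neg_smul, one_smul]
  · rw [neg_mul, one_div_mul_cancel hA, neg_smul, one_smul]
  · congr 1; ring

end Matrix

theorem stmt_14_general (g : Matrix (Fin 3) (Fin 3) ℝ) (g8 : Matrix (Fin 8) (Fin 8) ℝ)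
    (c A : ℝ) (hA : A ≠ 0) :
    (UB A)ᵀ * MC g g8 c * UB A =
      |g.det * g8.det| ^ (-(1 : ℝ) / 2) •
        fromBlocks
          (fromBlocks ((1 / (A ^ 2 * g.det)) • g) ((-(c / g.det)) • g)
            ((-(c / g.det)) • g) ((A ^ 2 * (1 + c ^ 2 / g.det)) • g))
          0 0 g8 := by
  rw [UB, MC, Matrix.mul_smul, Matrix.smul_mul,
    transpose_fromBlocks_mul_fromBlocks_mul_fromBlocks_one,
    transpose_buscher_mul_fromBlocks_mul_buscher hA]
  simp only [smul_smul, ← neg_smul, one_div_mul_one_div]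

/-- Buscher duality on the generalised metric: for invertible symmetric g, g8 and A ≠ 0,
U_B(A)ᵀ·M_C(g,g8,c)·U_B(A) = |det g·det g8|^(−1/2) ·
blockdiag([[(1/(A²·det g))·g, −(c/det g)·g], [−(c/det g)·g, A²·(1+c²/det g)·g]], g8). -/
theorem stmt_14 (g : Matrix (Fin 3) (Fin 3) ℝ) (g8 : Matrix (Fin 8) (Fin 8) ℝ)
    (hg : g.IsSymm) (hgdet : g.det ≠ 0) (hg8 : g8.IsSymm) (hg8det : g8.det ≠ 0)
    (c A : ℝ) (hA : A ≠ 0) :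
    (UB A)ᵀ * MC g g8 c * UB A =
      |g.det * g8.det| ^ (-(1 : ℝ) / 2) •
        fromBlocks
          (fromBlocks ((1 / (A ^ 2 * g.det)) • g) ((-(c / g.det)) • g)
            ((-(c / g.det)) • g) ((A ^ 2 * (1 + c ^ 2 / g.det)) • g))
          0 0 g8 :=
  stmt_14_general g g8 c A hA
end

section
/- Let g be a 4×4 real symmetric matrix with exactly one negative and three positive eigenvalues, let V ∈ ℝ⁴, set V² := Vᵀ g V, and define the 4×4 real symmetric matrix N := (1 − V²)·g + (gV)·(gV)ᵀ. Then: if V² < 1, N has exactly one negative and three positive eigenvalues; if V² > 1, N has exactly two negative and two positive eigenvalues; if V² = 1, det N = 0. In particular N is never positive definite and never negative definite. -/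
/-!
By Sylvester's law of inertia, the number of positive (negative) eigenvalues of a real symmetric
matrix bounds the dimension of every subspace on which its quadratic form is positive (negative),
and the bound is attained. Write `N(x) = (1 - V²) g(x, x) + (gV ⬝ x)²`. If `V² < 1`, then `N` is
positive on the three-dimensional positive subspace of `g` and negative at `e - (gV ⬝ e) V` for any
`g`-negative `e`. If `V² > 1`, then `N = (1 - V²) g` is negative on the (at least two-dimensional)
intersection of that subspace with the hyperplane `gV ⬝ x = 0`, and positive on `span {V, e}`.
As there are at most four nonzero eigenvalues, these bounds fix the signature. At `V² = 1`,
`N = (gV)(gV)ᵀ` vanishes on the hyperplane, so `det N = 0`.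
-/

open Matrix Module

theorem finrank_le_card_pos_of_eq_sum_sq {M ι : Type*} [AddCommGroup M] [Module ℝ M] [Fintype ι]
    (L : M →ₗ[ℝ] ι → ℝ) (d : ι → ℝ) {q : M → ℝ} (hq : ∀ x, q x = ∑ i, d i * L x i ^ 2)
    (S : Submodule ℝ M) (hS : ∀ x ∈ S, x ≠ 0 → 0 < q x) :
    finrank ℝ S ≤ Nat.card {i // 0 < d i} := by
  let φ : S →ₗ[ℝ] {i // 0 < d i} → ℝ := LinearMap.pi fun i ↦ LinearMap.proj i.1 ∘ₗ L ∘ₗ S.subtype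
  have hφ : Function.Injective φ := by
    rw [← LinearMap.ker_eq_bot, LinearMap.ker_eq_bot']
    rintro ⟨x, hxS⟩ hx
    by_contra hx0
    have hvanish : ∀ i, 0 < d i → L x i = 0 := fun i hi ↦ congrFun hx ⟨i, hi⟩
    have : q x ≤ 0 := by
      rw [hq]
      refine Finset.sum_nonpos fun i _ ↦ ?_
      by_cases hi : 0 < d i
      · simp [hvanish i hi]
      · exact mul_nonpos_of_nonpos_of_nonneg (not_lt.mp hi) (sq_nonneg _)
    exact this.not_gt (hS x hxS fun h ↦ hx0 (Subtype.ext h))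
  simpa [Nat.card_eq_fintype_card] using LinearMap.finrank_le_finrank_of_injective hφ

theorem Submodule.finrank_le_finrank_inf_ker_add_one {K V : Type*} [Field K] [AddCommGroup V]
    [Module K V] [FiniteDimensional K V] (P : Submodule K V) (f : V →ₗ[K] K) :
    finrank K P ≤ finrank K ↥(P ⊓ LinearMap.ker f) + 1 := by
  have hsup := (P ⊔ LinearMap.ker f).finrank_le
  have hrange := (LinearMap.range f).finrank_le
  rw [finrank_self] at hrange
  have := P.finrank_sup_add_finrank_inf_eq (LinearMap.ker f)
  have := f.finrank_range_add_finrank_ker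
  omega

theorem Set.ncard_neg_add_ncard_pos_le {n : Type*} [Fintype n] (d : n → ℝ) :
    {i | d i < 0}.ncard + {i | 0 < d i}.ncard ≤ Fintype.card n := by
  rw [← Set.ncard_union_eq (s := {i | d i < 0}) (t := {i | 0 < d i})
    (Set.disjoint_left.mpr fun i (h : d i < 0) (h' : 0 < d i) ↦ lt_asymm h h'),
    ← Nat.card_eq_fintype_card]
  exact Set.ncard_le_card _

namespace Matrix

theorem not_posDef_of_dotProduct_mulVec_nonpos {n : Type*} [Fintype n] {A : Matrix n n ℝ}
    {x : n → ℝ} (hx0 : x ≠ 0) (hx : x ⬝ᵥ A *ᵥ x ≤ 0) : ¬ A.PosDef :=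
  fun hA ↦ hx.not_gt (by simpa using hA.dotProduct_mulVec_pos hx0)

namespace IsHermitian

theorem mulVec_dotProduct {n : Type*} [Fintype n] {A : Matrix n n ℝ} (hA : A.IsHermitian)
    (v x : n → ℝ) : A *ᵥ v ⬝ᵥ x = v ⬝ᵥ A *ᵥ x := by
  rw [dotProduct_mulVec, ← mulVec_transpose, ← conjTranspose_eq_transpose_of_trivial, hA,
    dotProduct_comm]

variable {n : Type*} [Fintype n] [DecidableEq n] {A : Matrix n n ℝ} (hA : A.IsHermitian)

local notation "U" => (hA.eigenvectorUnitary : Matrix n n ℝ)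

theorem dotProduct_mulVec_eq_sum_eigenvalues (x : n → ℝ) :
    x ⬝ᵥ A *ᵥ x = ∑ i, hA.eigenvalues i * (star U *ᵥ x) i ^ 2 := by
  conv_lhs => rw [hA.spectral_theorem, Unitary.conjStarAlgAut_apply, ← mulVec_mulVec,
    ← mulVec_mulVec, dotProduct_mulVec, ← mulVec_transpose]
  simp [dotProduct, mulVec_diagonal, sq, mul_left_comm, star_eq_conjTranspose]

theorem finrank_le_ncard_pos (S : Submodule ℝ (n → ℝ)) (hS : ∀ x ∈ S, x ≠ 0 → 0 < x ⬝ᵥ A *ᵥ x) :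
    finrank ℝ S ≤ {i | 0 < hA.eigenvalues i}.ncard :=
  finrank_le_card_pos_of_eq_sum_sq (mulVecLin (star U)) _ hA.dotProduct_mulVec_eq_sum_eigenvalues
    S hS

theorem finrank_le_ncard_neg (S : Submodule ℝ (n → ℝ)) (hS : ∀ x ∈ S, x ≠ 0 → x ⬝ᵥ A *ᵥ x < 0) :
    finrank ℝ S ≤ {i | hA.eigenvalues i < 0}.ncard := by
  have h := finrank_le_card_pos_of_eq_sum_sq (mulVecLin (star U)) (-hA.eigenvalues)
    (q := fun x ↦ -(x ⬝ᵥ A *ᵥ x))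
    (by simp [hA.dotProduct_mulVec_eq_sum_eigenvalues, Finset.sum_neg_distrib]) S
    fun x hx hx0 ↦ neg_pos.mpr (hS x hx hx0)
  simp only [Pi.neg_apply, neg_pos] at h
  exact h

theorem exists_finrank_eq_ncard_pos : ∃ P : Submodule ℝ (n → ℝ),
    finrank ℝ P = {i | 0 < hA.eigenvalues i}.ncard ∧ ∀ x ∈ P, x ≠ 0 → 0 < x ⬝ᵥ A *ᵥ x := by
  classical
  set I := {i | 0 < hA.eigenvalues i}
  let W : Submodule ℝ (n → ℝ) := ⨅ i ∈ Iᶜ, LinearMap.ker (LinearMap.proj i)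
  have hW : finrank ℝ W = I.ncard := by
    rw [(LinearMap.iInfKerProjEquiv ℝ (fun _ ↦ ℝ) disjoint_compl_right (by simp)).finrank_eq,
      finrank_fintype_fun_eq_card, ← Nat.card_eq_fintype_card, Nat.card_coe_set_eq]
  have hU : star U * U = 1 := Unitary.coe_star_mul_self _
  have hinj : Function.Injective (mulVecLin U) := fun y z h ↦ by
    simpa [mulVec_mulVec, hU] using congrArg (star U *ᵥ ·) h
  refine ⟨W.map (mulVecLin U), ?_, ?_⟩
  · rw [← hW]; exact (Submodule.equivMapOfInjective _ hinj W).finrank_eq.symm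
  rintro _ ⟨y, hyW, rfl⟩ hy0
  have hyI : ∀ i ∉ I, y i = 0 := by simpa [W] using hyW
  obtain ⟨j, hj⟩ := Function.ne_iff.mp (by rintro rfl; simp at hy0 : y ≠ 0)
  rw [hA.dotProduct_mulVec_eq_sum_eigenvalues]
  simp only [mulVecLin_apply, mulVec_mulVec, hU, one_mulVec]
  have hjI : 0 < hA.eigenvalues j := not_not.mp fun h ↦ hj (hyI j h)
  refine Finset.sum_pos' (fun i _ ↦ ?_) ⟨j, Finset.mem_univ _, mul_pos hjI (sq_pos_of_ne_zero hj)⟩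
  by_cases hi : i ∈ I
  · exact mul_nonneg (le_of_lt hi) (sq_nonneg _)
  · simp [hyI i hi]

theorem exists_dotProduct_mulVec_neg_iff :
    (∃ x, x ⬝ᵥ A *ᵥ x < 0) ↔ ∃ i, hA.eigenvalues i < 0 := by
  have := hA.posSemidef_iff_eigenvalues_nonneg
  simp only [posSemidef_iff_dotProduct_mulVec, star_trivial, Pi.le_def, Pi.zero_apply, hA,
    true_and] at this
  simpa using not_congr this

theorem two_le_ncard_pos_of_pair {x y : n → ℝ}
    (h : ∀ a b : ℝ, a ≠ 0 ∨ b ≠ 0 → 0 < (a • x + b • y) ⬝ᵥ A *ᵥ (a • x + b • y)) :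
    2 ≤ {i | 0 < hA.eigenvalues i}.ncard := by
  have hli : LinearIndependent ℝ ![x, y] := LinearIndependent.pair_iff.mpr fun a b hab ↦ by
    by_contra! hne
    simpa [hab] using h a b (by tauto)
  have := hA.finrank_le_ncard_pos (Submodule.span ℝ (Set.range ![x, y])) fun z hz hz0 ↦ ?_
  · rwa [finrank_span_eq_card hli, Fintype.card_fin] at this
  rw [range_cons_cons_empty, Submodule.mem_span_pair] at hz
  obtain ⟨a, b, rfl⟩ := hz
  exact h a b (by by_contra! hab; simp [hab] at hz0)

theorem exists_ncard_pos_le_finrank_add_one_of_dotProduct_eq_zero (w : n → ℝ) :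
    ∃ S : Submodule ℝ (n → ℝ), {i | 0 < hA.eigenvalues i}.ncard ≤ finrank ℝ S + 1 ∧
      ∀ x ∈ S, w ⬝ᵥ x = 0 ∧ (x ≠ 0 → 0 < x ⬝ᵥ A *ᵥ x) := by
  obtain ⟨P, hP, hPpos⟩ := hA.exists_finrank_eq_ncard_pos
  refine ⟨P ⊓ LinearMap.ker (dotProductBilin ℝ ℝ w), ?_, fun x ⟨hxP, hxw⟩ ↦ ⟨hxw, hPpos x hxP⟩⟩
  rw [← hP]
  exact P.finrank_le_finrank_inf_ker_add_one _

theorem exists_ne_zero_dotProduct_eq_zero_pos (h2 : 2 ≤ {i | 0 < hA.eigenvalues i}.ncard)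
    (w : n → ℝ) : ∃ x ≠ 0, w ⬝ᵥ x = 0 ∧ 0 < x ⬝ᵥ A *ᵥ x := by
  obtain ⟨S, hS, hSpos⟩ := hA.exists_ncard_pos_le_finrank_add_one_of_dotProduct_eq_zero w
  obtain ⟨x, hxS, hx0⟩ := Submodule.exists_mem_ne_zero_of_ne_bot fun (h : S = ⊥) ↦ by
    rw [h, finrank_bot] at hS; omega
  exact ⟨x, hx0, (hSpos x hxS).1, (hSpos x hxS).2 hx0⟩

end IsHermitian

variable {n : Type*} [Fintype n]

noncomputable def spacetimeBlock (g : Matrix n n ℝ) (V : n → ℝ) : Matrix n n ℝ :=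
  (1 - V ⬝ᵥ g *ᵥ V) • g + vecMulVec (g *ᵥ V) (g *ᵥ V)

theorem spacetimeBlock_mulVec (g : Matrix n n ℝ) (V x : n → ℝ) :
    spacetimeBlock g V *ᵥ x = (1 - V ⬝ᵥ g *ᵥ V) • (g *ᵥ x) + (g *ᵥ V ⬝ᵥ x) • (g *ᵥ V) := by
  ext i
  simp [spacetimeBlock, add_mulVec, smul_mulVec, vecMulVec_mulVec, mul_comm]

theorem dotProduct_spacetimeBlock_mulVec (g : Matrix n n ℝ) (V x : n → ℝ) :
    x ⬝ᵥ spacetimeBlock g V *ᵥ x = (1 - V ⬝ᵥ g *ᵥ V) * (x ⬝ᵥ g *ᵥ x) + (g *ᵥ V ⬝ᵥ x) ^ 2 := by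
  rw [spacetimeBlock_mulVec, dotProduct_add, dotProduct_smul, dotProduct_smul, smul_eq_mul,
    smul_eq_mul, dotProduct_comm x (g *ᵥ V), sq]

theorem dotProduct_spacetimeBlock_mulVec_of_dotProduct_eq_zero (g : Matrix n n ℝ) {V x : n → ℝ}
    (hx : g *ᵥ V ⬝ᵥ x = 0) :
    x ⬝ᵥ spacetimeBlock g V *ᵥ x = (1 - V ⬝ᵥ g *ᵥ V) * (x ⬝ᵥ g *ᵥ x) := by
  rw [dotProduct_spacetimeBlock_mulVec, hx, sq, mul_zero, add_zero]

theorem det_spacetimeBlock_eq_zero [DecidableEq n] (g : Matrix n n ℝ) {V x : n → ℝ}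
    (hV : V ⬝ᵥ g *ᵥ V = 1) (hx0 : x ≠ 0) (hxV : g *ᵥ V ⬝ᵥ x = 0) :
    (spacetimeBlock g V).det = 0 :=
  exists_mulVec_eq_zero_iff.mp ⟨x, hx0, by simp [spacetimeBlock_mulVec, hV, hxV]⟩

variable {g : Matrix n n ℝ} (hg : g.IsHermitian) (V : n → ℝ)
include hg

theorem dotProduct_spacetimeBlock_mulVec_smul_add_smul (e : n → ℝ) (a b : ℝ) :
    (a • V + b • e) ⬝ᵥ spacetimeBlock g V *ᵥ (a • V + b • e) =
      a ^ 2 * (V ⬝ᵥ g *ᵥ V) + 2 * a * b * (g *ᵥ V ⬝ᵥ e) +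
        b ^ 2 * ((g *ᵥ V ⬝ᵥ e) ^ 2 + (1 - V ⬝ᵥ g *ᵥ V) * (e ⬝ᵥ g *ᵥ e)) := by
  rw [dotProduct_spacetimeBlock_mulVec]
  simp only [mulVec_add, mulVec_smul, dotProduct_add, add_dotProduct, dotProduct_smul,
    smul_dotProduct, smul_eq_mul, hg.mulVec_dotProduct V, dotProduct_comm e (g *ᵥ V)]
  ring

/-- With `s = gV ⬝ e`, the value at `e - s V` is `(1 - V²) (e ⬝ g e - s²)`. -/
theorem exists_dotProduct_spacetimeBlock_mulVec_neg {e : n → ℝ} (he : e ⬝ᵥ g *ᵥ e < 0)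
    (hV : V ⬝ᵥ g *ᵥ V < 1) : ∃ x, x ⬝ᵥ spacetimeBlock g V *ᵥ x < 0 := by
  refine ⟨(-(g *ᵥ V ⬝ᵥ e)) • V + (1 : ℝ) • e, ?_⟩
  rw [dotProduct_spacetimeBlock_mulVec_smul_add_smul hg]
  nlinarith [sq_nonneg (g *ᵥ V ⬝ᵥ e)]

/-- Multiplied by `V²`, the value is `(a V² + b s)² + b² (V² - 1) (s² - V² (e ⬝ g e))`,
where `s = gV ⬝ e`. -/
theorem dotProduct_spacetimeBlock_mulVec_pair_pos {e : n → ℝ} (he : e ⬝ᵥ g *ᵥ e < 0)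
    (hV : 1 < V ⬝ᵥ g *ᵥ V) (a b : ℝ) (hab : a ≠ 0 ∨ b ≠ 0) :
    0 < (a • V + b • e) ⬝ᵥ spacetimeBlock g V *ᵥ (a • V + b • e) := by
  rw [dotProduct_spacetimeBlock_mulVec_smul_add_smul hg]
  set c := V ⬝ᵥ g *ᵥ V
  set s := g *ᵥ V ⬝ᵥ e
  set l := e ⬝ᵥ g *ᵥ e
  have hkey : c * (a ^ 2 * c + 2 * a * b * s + b ^ 2 * (s ^ 2 + (1 - c) * l)) =
      (a * c + b * s) ^ 2 + b ^ 2 * ((c - 1) * (s ^ 2 - c * l)) := by ring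
  refine pos_of_mul_pos_right (a := c) ?_ (by linarith)
  rw [hkey]
  rcases eq_or_ne b 0 with rfl | hb
  · have ha : a ≠ 0 := by simpa using hab
    nlinarith [sq_pos_of_ne_zero (mul_ne_zero ha (show c ≠ 0 by linarith))]
  · have : 0 < b ^ 2 * ((c - 1) * (s ^ 2 - c * l)) :=
      mul_pos (sq_pos_of_ne_zero hb) (mul_pos (by linarith) (by nlinarith [sq_nonneg s]))
    nlinarith [sq_nonneg (a * c + b * s)]

theorem not_posDef_spacetimeBlock {e x : n → ℝ} (he : e ⬝ᵥ g *ᵥ e < 0) (hx0 : x ≠ 0)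
    (hxV : g *ᵥ V ⬝ᵥ x = 0) (hx : 0 < x ⬝ᵥ g *ᵥ x) : ¬ (spacetimeBlock g V).PosDef := by
  rcases lt_or_ge (V ⬝ᵥ g *ᵥ V) 1 with hV | hV
  · obtain ⟨y, hy⟩ := exists_dotProduct_spacetimeBlock_mulVec_neg hg V he hV
    exact not_posDef_of_dotProduct_mulVec_nonpos (by rintro rfl; simp at hy) hy.le
  · refine not_posDef_of_dotProduct_mulVec_nonpos hx0 ?_
    rw [dotProduct_spacetimeBlock_mulVec_of_dotProduct_eq_zero g hxV]
    nlinarith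

theorem not_posDef_neg_spacetimeBlock {x : n → ℝ} (hx0 : x ≠ 0) (hxV : g *ᵥ V ⬝ᵥ x = 0)
    (hx : 0 < x ⬝ᵥ g *ᵥ x) : ¬ (-spacetimeBlock g V).PosDef := by
  rcases lt_or_ge (V ⬝ᵥ g *ᵥ V) 1 with hV | hV
  · refine not_posDef_of_dotProduct_mulVec_nonpos hx0 ?_
    rw [neg_mulVec, dotProduct_neg, dotProduct_spacetimeBlock_mulVec_of_dotProduct_eq_zero g hxV]
    nlinarith
  · refine not_posDef_of_dotProduct_mulVec_nonpos (x := V) (by rintro rfl; norm_num at hV) ?_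
    rw [neg_mulVec, dotProduct_neg, dotProduct_spacetimeBlock_mulVec, hg.mulVec_dotProduct]
    nlinarith

variable [DecidableEq n] (hN : (spacetimeBlock g V).IsHermitian)
include hN

theorem ncard_pos_le_ncard_pos_spacetimeBlock (hV : V ⬝ᵥ g *ᵥ V < 1) :
    {i | 0 < hg.eigenvalues i}.ncard ≤ {i | 0 < hN.eigenvalues i}.ncard := by
  obtain ⟨P, hP, hPpos⟩ := hg.exists_finrank_eq_ncard_pos
  refine hP ▸ hN.finrank_le_ncard_pos P fun x hx hx0 ↦ ?_
  rw [dotProduct_spacetimeBlock_mulVec]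
  nlinarith [hPpos x hx hx0, sq_nonneg (g *ᵥ V ⬝ᵥ x)]

theorem ncard_pos_le_ncard_neg_spacetimeBlock_add_one (hV : 1 < V ⬝ᵥ g *ᵥ V) :
    {i | 0 < hg.eigenvalues i}.ncard ≤ {i | hN.eigenvalues i < 0}.ncard + 1 := by
  obtain ⟨S, hS, hSpos⟩ := hg.exists_ncard_pos_le_finrank_add_one_of_dotProduct_eq_zero (g *ᵥ V)
  have := hN.finrank_le_ncard_neg S fun x hx hx0 ↦ by
    rw [dotProduct_spacetimeBlock_mulVec_of_dotProduct_eq_zero g (hSpos x hx).1]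
    nlinarith [(hSpos x hx).2 hx0]
  omega

end Matrix

/-- Let g be a 4×4 real symmetric matrix with exactly one negative and three positive
eigenvalues, V ∈ ℝ⁴, V² := Vᵀ g V and N := (1 − V²)·g + (gV)·(gV)ᵀ. Then N has signature
(1,3) if V² < 1, signature (2,2) if V² > 1, det N = 0 if V² = 1, and N is never positive
definite nor negative definite. -/
theorem stmt_19 (g : Matrix (Fin 4) (Fin 4) ℝ) (hg : g.IsHermitian)
    (hneg : {i | hg.eigenvalues i < 0}.ncard = 1)
    (hpos : {i | 0 < hg.eigenvalues i}.ncard = 3)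
    (V : Fin 4 → ℝ) (V2 : ℝ) (hV2 : V2 = V ⬝ᵥ g.mulVec V)
    (N : Matrix (Fin 4) (Fin 4) ℝ)
    (hN : N = (1 - V2) • g + vecMulVec (g.mulVec V) (g.mulVec V)) :
    (∀ hNh : N.IsHermitian,
      (V2 < 1 →
        {i | hNh.eigenvalues i < 0}.ncard = 1 ∧ {i | 0 < hNh.eigenvalues i}.ncard = 3) ∧
      (1 < V2 →
        {i | hNh.eigenvalues i < 0}.ncard = 2 ∧ {i | 0 < hNh.eigenvalues i}.ncard = 2)) ∧
    (V2 = 1 → N.det = 0) ∧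
    ¬ N.PosDef ∧ ¬ (-N).PosDef := by
  obtain rfl : V2 = V ⬝ᵥ g *ᵥ V := hV2
  obtain rfl : N = spacetimeBlock g V := hN
  obtain ⟨e, he⟩ := hg.exists_dotProduct_mulVec_neg_iff.mpr ((Set.ncard_pos).mp (hneg ▸ one_pos))
  obtain ⟨x, hx0, hxV, hx⟩ := hg.exists_ne_zero_dotProduct_eq_zero_pos (by omega) (g *ᵥ V)
  refine ⟨fun hN ↦ ⟨fun hV ↦ ?_, fun hV ↦ ?_⟩, fun hV ↦ det_spacetimeBlock_eq_zero g hV hx0 hxV,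
    not_posDef_spacetimeBlock hg V he hx0 hxV hx, not_posDef_neg_spacetimeBlock hg V hx0 hxV hx⟩
  all_goals
    have hsum := Set.ncard_neg_add_ncard_pos_le hN.eigenvalues
    rw [Fintype.card_fin] at hsum
  · have := ncard_pos_le_ncard_pos_spacetimeBlock hg V hN hV
    have : 0 < {i | hN.eigenvalues i < 0}.ncard := (Set.ncard_pos).mpr <|
      hN.exists_dotProduct_mulVec_neg_iff.mp <|
        exists_dotProduct_spacetimeBlock_mulVec_neg hg V he hV
    omega
  · have := ncard_pos_le_ncard_neg_spacetimeBlock_add_one hg V hN hV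
    have := hN.two_le_ncard_pos_of_pair (dotProduct_spacetimeBlock_mulVec_pair_pos hg V he hV)
    omega
end
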